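/- arXiv:math/0610580 — 7 statements merged into one kernel-verified Lean document; each statement's English description precedes it below -/
import Mathlib

section
/- Let N ≥ 2 and let A be an irreducible N×N real matrix satisfying Condition A1 with normalized positive left eigenvector ξ (ξ^T A = 0, Σ_i ξ_i = 1, all ξ_i > 0), and let Ξ = diag(ξ_1,…,ξ_N). Then the symmetric matrix Ξ A + A^T Ξ has all diagonal entries negative, every row sums to zero, it is negative semidefinite, and its kernel is exactly the span of (1,1,…,1)^T; equivalently, its eigenvalues satisfy λ_1 = 0 > λ_2 ≥ ⋯ ≥ λ_N. -/
open Matrix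

/-- Let A be an irreducible N×N matrix (N ≥ 2) satisfying Condition A1,
with normalized positive left 0-eigenvector ξ, and Ξ = diag ξ. Then the symmetric
matrix ΞA + AᵀΞ has negative diagonal entries, zero row sums, is negative semidefinite,
and its kernel is exactly the span of the all-ones vector (equivalently, its eigenvalues
satisfy λ₁ = 0 > λ₂ ≥ ⋯ ≥ λ_N). -/
theorem stmt4 (N : ℕ) (hN : 2 ≤ N) (A : Matrix (Fin N) (Fin N) ℝ)
    (hoff : ∀ i j, i ≠ j → 0 ≤ A i j)
    (hdiag : ∀ i, A i i = -∑ j ∈ Finset.univ.erase i, A i j)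
    (hirr : ∀ S : Finset (Fin N), S.Nonempty → S ≠ Finset.univ →
      ∃ i ∈ S, ∃ j, j ∉ S ∧ A i j ≠ 0)
    (ξ : Fin N → ℝ) (hξpos : ∀ i, 0 < ξ i) (hξsum : ∑ i, ξ i = 1)
    (hξeig : Matrix.vecMul ξ A = 0) :
    let B : Matrix (Fin N) (Fin N) ℝ :=
      Matrix.of fun i j => ξ i * A i j + A j i * ξ j
    (∀ i j, B i j = B j i) ∧
    (∀ i, B i i < 0) ∧
    (∀ i, ∑ j, B i j = 0) ∧
    (∀ v : Fin N → ℝ, v ⬝ᵥ B.mulVec v ≤ 0) ∧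
    (∀ v : Fin N → ℝ, B.mulVec v = 0 ↔ ∃ r : ℝ, ∀ i, v i = r) := by
  intro B
  have hB : ∀ i j, B i j = ξ i * A i j + A j i * ξ j := fun i j => rfl
  -- row sums of A are zero
  have hrowA : ∀ i, ∑ j, A i j = 0 := by
    intro i
    have h : ∑ j ∈ Finset.univ.erase i, A i j + A i i = ∑ j, A i j :=
      Finset.sum_erase_add Finset.univ _ (Finset.mem_univ i)
    rw [← h, hdiag i]; ring
  -- columns of A weighted by ξ sum to zero
  have hcolA : ∀ j, ∑ i, ξ i * A i j = 0 := by
    intro j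
    have h := congrFun hξeig j
    simpa [Matrix.vecMul, dotProduct] using h
  -- symmetry
  have hsymm : ∀ i j, B i j = B j i := by
    intro i j; rw [hB, hB]; ring
  -- off-diagonal nonneg
  have hBoff : ∀ i j, i ≠ j → 0 ≤ B i j := by
    intro i j hij
    rw [hB]
    have h1 := mul_nonneg (hξpos i).le (hoff i j hij)
    have h2 := mul_nonneg (hoff j i hij.symm) (hξpos j).le
    linarith
  -- diagonal of A negative
  have hAdiag : ∀ i, A i i < 0 := by
    intro i
    have hne : ({i} : Finset (Fin N)) ≠ Finset.univ := by
      intro h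
      have h2 : Fintype.card (Fin N) = 1 := by
        rw [← Finset.card_univ, ← h, Finset.card_singleton]
      simp at h2; omega
    obtain ⟨a, ha, j, hj, hAij⟩ := hirr {i} ⟨i, Finset.mem_singleton_self i⟩ hne
    have ha' : a = i := Finset.mem_singleton.1 ha
    rw [ha'] at hAij
    rw [Finset.mem_singleton] at hj
    have hji : j ≠ i := hj
    have hpos : 0 < ∑ k ∈ Finset.univ.erase i, A i k := by
      apply Finset.sum_pos'
      · intro k hk
        exact hoff i k (Finset.ne_of_mem_erase hk).symm
      · exact ⟨j, Finset.mem_erase.2 ⟨hji, Finset.mem_univ j⟩,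
          lt_of_le_of_ne (hoff i j (Ne.symm hji)) (Ne.symm hAij)⟩
    rw [hdiag i]; linarith
  -- diagonal of B negative
  have hBdiag : ∀ i, B i i < 0 := by
    intro i
    rw [hB]
    have h1 : ξ i * A i i < 0 := mul_neg_of_pos_of_neg (hξpos i) (hAdiag i)
    have h2 : A i i * ξ i < 0 := mul_neg_of_neg_of_pos (hAdiag i) (hξpos i)
    linarith
  -- row sums of B are zero
  have hBrow : ∀ i, ∑ j, B i j = 0 := by
    intro i
    have : ∑ j, B i j = ξ i * (∑ j, A i j) + ∑ j, ξ j * A j i := by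
      rw [Finset.mul_sum, ← Finset.sum_add_distrib]
      exact Finset.sum_congr rfl fun j _ => by rw [hB]; ring
    rw [this, hrowA i, hcolA i]; ring
  -- key quadratic form identity
  have key : ∀ v : Fin N → ℝ,
      v ⬝ᵥ B.mulVec v = -(1/2) * ∑ i, ∑ j, B i j * (v i - v j)^2 := by
    intro v
    have hQ : v ⬝ᵥ B.mulVec v = ∑ i, ∑ j, v i * (B i j * v j) := by
      simp [dotProduct, Matrix.mulVec, Finset.mul_sum]
    have hexp : ∑ i, ∑ j, B i j * (v i - v j)^2
        = (∑ i, ∑ j, B i j * (v i)^2) + (∑ i, ∑ j, B i j * (v j)^2)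
          - 2 * ∑ i, ∑ j, v i * (B i j * v j) := by
      rw [← Finset.sum_add_distrib]
      rw [Finset.mul_sum, ← Finset.sum_sub_distrib]
      apply Finset.sum_congr rfl; intro i _
      rw [← Finset.sum_add_distrib]
      rw [Finset.mul_sum, ← Finset.sum_sub_distrib]
      apply Finset.sum_congr rfl; intro j _
      ring
    have h1 : ∑ i, ∑ j, B i j * (v i)^2 = 0 := by
      apply Finset.sum_eq_zero; intro i _
      rw [← Finset.sum_mul, hBrow i, zero_mul]
    have h2 : ∑ i, ∑ j, B i j * (v j)^2 = 0 := by
      rw [Finset.sum_comm]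
      apply Finset.sum_eq_zero; intro j _
      have : ∑ i, B i j * (v j)^2 = (∑ i, B j i) * (v j)^2 := by
        rw [Finset.sum_mul]
        exact Finset.sum_congr rfl fun i _ => by rw [hsymm i j]
      rw [this, hBrow j, zero_mul]
    rw [hQ]
    rw [hexp, h1, h2] at *
    linarith
  -- all terms of the double sum are nonneg
  have hterm : ∀ v : Fin N → ℝ, ∀ i j, 0 ≤ B i j * (v i - v j)^2 := by
    intro v i j
    rcases eq_or_ne i j with rfl | hij
    · simp
    · exact mul_nonneg (hBoff i j hij) (sq_nonneg _)
  have hSnn : ∀ v : Fin N → ℝ, 0 ≤ ∑ i, ∑ j, B i j * (v i - v j)^2 := by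
    intro v
    apply Finset.sum_nonneg; intro i _
    exact Finset.sum_nonneg fun j _ => hterm v i j
  refine ⟨hsymm, hBdiag, hBrow, ?_, ?_⟩
  · intro v
    rw [key v]
    have := hSnn v
    linarith
  · intro v
    constructor
    · intro hv
      -- quadratic form is zero
      have hQ0 : v ⬝ᵥ B.mulVec v = 0 := by rw [hv]; simp
      have hS0 : ∑ i, ∑ j, B i j * (v i - v j)^2 = 0 := by
        rw [key v] at hQ0; linarith
      have hall : ∀ i j, B i j * (v i - v j)^2 = 0 := by
        intro i j
        have houter := (Finset.sum_eq_zero_iff_of_nonneg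
          (fun i _ => Finset.sum_nonneg fun j _ => hterm v i j)).1 hS0 i (Finset.mem_univ i)
        exact (Finset.sum_eq_zero_iff_of_nonneg
          (fun j _ => hterm v i j)).1 houter j (Finset.mem_univ j)
      -- A i j ≠ 0, i ≠ j ⇒ v i = v j
      have hconn : ∀ i j, i ≠ j → A i j ≠ 0 → v i = v j := by
        intro i j hij hA
        have hBpos : 0 < B i j := by
          rw [hB]
          have h1 : 0 < ξ i * A i j :=
            mul_pos (hξpos i) (lt_of_le_of_ne (hoff i j hij) (Ne.symm hA))
          have h2 : 0 ≤ A j i * ξ j := mul_nonneg (hoff j i hij.symm) (hξpos j).le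
          linarith
        have := hall i j
        have hsq : (v i - v j)^2 = 0 := (mul_eq_zero.1 this).resolve_left hBpos.ne'
        have := sq_eq_zero_iff.1 hsq
        linarith
      -- level set of v at index 0 is everything
      have hi0 : (0 : ℕ) < N := by omega
      set i0 : Fin N := ⟨0, hi0⟩
      set S : Finset (Fin N) := Finset.univ.filter (fun i => v i = v i0) with hS
      have hi0S : i0 ∈ S := by simp [hS]
      have hSuniv : S = Finset.univ := by
        by_contra hne
        obtain ⟨a, haS, b, hbS, hA⟩ := hirr S ⟨i0, hi0S⟩ hne
        have hab : a ≠ b := by rintro rfl; exact hbS haS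
        have hva : v a = v i0 := (Finset.mem_filter.1 haS).2
        have hvb : v b = v i0 := by rw [← hconn a b hab hA]; exact hva
        exact hbS (Finset.mem_filter.2 ⟨Finset.mem_univ b, hvb⟩)
      refine ⟨v i0, fun i => ?_⟩
      have : i ∈ S := hSuniv ▸ Finset.mem_univ i
      exact (Finset.mem_filter.1 this).2
    · rintro ⟨r, hr⟩
      funext i
      have hsum : ∑ j, B i j * v j = 0 := by
        calc ∑ j, B i j * v j = ∑ j, B i j * r :=
              Finset.sum_congr rfl fun j _ => by rw [hr j]
          _ = (∑ j, B i j) * r := (Finset.sum_mul _ _ _).symm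
          _ = 0 := by rw [hBrow i, zero_mul]
      simpa [Matrix.mulVec, dotProduct] using hsum
end

section
/- Let N ≥ 2, let A be an irreducible N×N real matrix satisfying Condition A1 with normalized positive left eigenvector ξ, let Ξ = diag(ξ_1,…,ξ_N) and U = Ξ − ξξ^T, let Δ = diag(δ_1,…,δ_n) be any diagonal matrix, and let Γ = diag(γ_1,…,γ_n) with all γ_j > 0. Then there exists c > 0 such that for every j ∈ {1,…,n} and every vector v ∈ ℝ^N, δ_j v^T U v + c γ_j v^T ((Ξ A + A^T Ξ)/2) v ≤ 0. -/
open Matrix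

/-!
Both quadratic forms are weighted sums of squared differences: with
`E_w(v) = ∑ᵢⱼ wᵢⱼ (vᵢ - vⱼ)²`, one has `vᵀUv = E_{ξξᵀ}(v) / 2` and, because the rows of `A` and the
columns of `ΞA` sum to zero, `vᵀ((ΞA + AᵀΞ)/2)v = -E_{ΞA}(v) / 2`. Both energies are nonnegative,
homogeneous of degree two and blind to adding a constant; by irreducibility `E_{ΞA}` vanishes only on
constants. Compactness of the unit sphere of the mean-zero hyperplane then gives
`E_{ξξᵀ} ≤ K E_{ΞA}`, and `c` only has to dominate `K δⱼ / γⱼ` for the finitely many `j`.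
-/

open Finset

section
variable {ι : Type*} {w : ι → ι → ℝ}

theorem mul_sub_sq_nonneg (hw : ∀ i j, i ≠ j → 0 ≤ w i j) (v : ι → ℝ) (i j : ι) :
    0 ≤ w i j * (v i - v j) ^ 2 := by
  rcases eq_or_ne i j with rfl | hij
  · simp
  · exact mul_nonneg (hw i j hij) (sq_nonneg _)

variable [Fintype ι]

def pairEnergy (w : ι → ι → ℝ) (v : ι → ℝ) : ℝ := ∑ i, ∑ j, w i j * (v i - v j) ^ 2

theorem pairEnergy_nonneg (hw : ∀ i j, i ≠ j → 0 ≤ w i j) (v : ι → ℝ) :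
    0 ≤ pairEnergy w v :=
  sum_nonneg fun i _ => sum_nonneg fun j _ => mul_sub_sq_nonneg hw v i j

theorem pairEnergy_smul (w : ι → ι → ℝ) (t : ℝ) (v : ι → ℝ) :
    pairEnergy w (t • v) = t ^ 2 * pairEnergy w v := by
  simp only [pairEnergy, mul_sum, Pi.smul_apply, smul_eq_mul]
  exact sum_congr rfl fun i _ => sum_congr rfl fun j _ => by ring

theorem pairEnergy_sub_const (w : ι → ι → ℝ) (v : ι → ℝ) (a : ℝ) :
    pairEnergy w (fun i => v i - a) = pairEnergy w v := by
  simp only [pairEnergy, sub_sub_sub_cancel_right]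

theorem continuous_pairEnergy (w : ι → ι → ℝ) : Continuous (pairEnergy w) := by
  unfold pairEnergy; fun_prop

theorem pairEnergy_eq (w : ι → ι → ℝ) (v : ι → ℝ) :
    pairEnergy w v = ∑ i, (∑ j, w i j) * v i ^ 2 + ∑ j, (∑ i, w i j) * v j ^ 2
      - 2 * ∑ i, ∑ j, w i j * v i * v j := by
  simp only [pairEnergy, sum_mul, mul_sum]
  rw [sum_comm (γ := ι) (f := fun j i => w i j * v j ^ 2)]
  simp only [← sum_add_distrib, ← sum_sub_distrib]
  exact sum_congr rfl fun i _ => sum_congr rfl fun j _ => by ring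

theorem apply_eq_apply_of_pairEnergy_eq_zero (hw : ∀ i j, i ≠ j → 0 ≤ w i j)
    (hirr : ∀ S : Finset ι, S.Nonempty → S ≠ univ → ∃ i ∈ S, ∃ j, j ∉ S ∧ w i j ≠ 0)
    {v : ι → ℝ} (hv : pairEnergy w v = 0) (i j : ι) : v i = v j := by
  have hterm : ∀ k l, w k l * (v k - v l) ^ 2 = 0 := fun k l =>
    (sum_eq_zero_iff_of_nonneg fun l _ => mul_sub_sq_nonneg hw v k l).1
      ((sum_eq_zero_iff_of_nonneg fun k _ =>
        sum_nonneg fun l _ => mul_sub_sq_nonneg hw v k l).1 hv k (mem_univ k)) l (mem_univ l)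
  by_contra hij
  obtain ⟨k, hk, l, hl, hkl⟩ := hirr ({k | v k = v i} : Finset ι) ⟨i, by simp⟩
    fun h => hij (by simpa [eq_comm] using h.ge (mem_univ j))
  simp only [mem_filter, mem_univ, true_and] at hk hl
  have : v k = v l := by simpa [sub_eq_zero, hkl] using hterm k l
  exact hl (this ▸ hk)

theorem sum_sub_mean (v : ι → ℝ) : ∑ i, (v i - (∑ j, v j) / Fintype.card ι) = 0 := by
  rcases isEmpty_or_nonempty ι with hι | hι
  · simp
  · rw [sum_sub_distrib, sum_const, card_univ, nsmul_eq_mul,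
      mul_div_cancel₀ _ (Nat.cast_ne_zero.2 Fintype.card_ne_zero), sub_self]

theorem pairEnergy_pos_of_sum_eq_zero (hw : ∀ i j, i ≠ j → 0 ≤ w i j)
    (hirr : ∀ S : Finset ι, S.Nonempty → S ≠ univ → ∃ i ∈ S, ∃ j, j ∉ S ∧ w i j ≠ 0)
    {u : ι → ℝ} (hu : u ≠ 0) (hsum : ∑ i, u i = 0) : 0 < pairEnergy w u := by
  refine (pairEnergy_nonneg hw u).lt_of_ne fun h => ?_
  obtain ⟨i, hi⟩ : ∃ i, u i ≠ 0 := Function.ne_iff.1 hu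
  have : Nonempty ι := ⟨i⟩
  have hconst : ∑ j, u j = Fintype.card ι * u i := by
    simp [apply_eq_apply_of_pairEnergy_eq_zero hw hirr h.symm _ i]
  simp [hconst, Fintype.card_ne_zero, hi] at hsum

theorem exists_pairEnergy_le_mul (w w' : ι → ι → ℝ) (hw' : ∀ i j, i ≠ j → 0 ≤ w' i j)
    (hirr : ∀ S : Finset ι, S.Nonempty → S ≠ univ → ∃ i ∈ S, ∃ j, j ∉ S ∧ w' i j ≠ 0) :
    ∃ K, ∀ v, pairEnergy w v ≤ K * pairEnergy w' v := by
  set S : Set (ι → ℝ) := Metric.sphere 0 1 ∩ {u | ∑ i, u i = 0}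
  have hS : IsCompact S :=
    (isCompact_sphere 0 1).inter_right (isClosed_eq (by fun_prop) continuous_const)
  have hpos : ∀ u ∈ S, 0 < pairEnergy w' u := fun u ⟨hu1, hu0⟩ =>
    pairEnergy_pos_of_sum_eq_zero hw' hirr (ne_zero_of_mem_unit_sphere ⟨u, hu1⟩) hu0
  obtain ⟨K, hK⟩ := hS.bddAbove_image (f := fun u => pairEnergy w u / pairEnergy w' u)
    ((continuous_pairEnergy w).continuousOn.div (continuous_pairEnergy w').continuousOn
      fun u hu => (hpos u hu).ne')
  have hKS : ∀ u ∈ S, pairEnergy w u ≤ K * pairEnergy w' u := fun u hu =>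
    (div_le_iff₀ (hpos u hu)).1 (hK ⟨u, hu, rfl⟩)
  refine ⟨K, fun v => ?_⟩
  set v₀ : ι → ℝ := fun i => v i - (∑ j, v j) / Fintype.card ι
  rw [← pairEnergy_sub_const w, ← pairEnergy_sub_const w']
  change pairEnergy w v₀ ≤ K * pairEnergy w' v₀
  rcases eq_or_ne v₀ 0 with h0 | h0
  · simp [h0, pairEnergy]
  · have hn : 0 < ‖v₀‖ := norm_pos_iff.2 h0
    obtain ⟨u, hu, hv₀u⟩ : ∃ u ∈ S, v₀ = ‖v₀‖ • u := by
      refine ⟨‖v₀‖⁻¹ • v₀, ⟨by simp [norm_smul, hn.ne'], ?_⟩, (smul_inv_smul₀ hn.ne' v₀).symm⟩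
      change ∑ i, ‖v₀‖⁻¹ * v₀ i = 0
      rw [← mul_sum, sum_sub_mean, mul_zero]
    rw [hv₀u, pairEnergy_smul, pairEnergy_smul, mul_left_comm]
    exact mul_le_mul_of_nonneg_left (hKS u hu) (sq_nonneg _)

theorem dotProduct_of_mulVec (M : ι → ι → ℝ) (v : ι → ℝ) :
    v ⬝ᵥ Matrix.of M *ᵥ v = ∑ i, ∑ j, M i j * v i * v j := by
  simp only [dotProduct, mulVec, of_apply, mul_sum]
  exact sum_congr rfl fun i _ => sum_congr rfl fun j _ => by ring

theorem dotProduct_diag_sub_outer_mulVec [DecidableEq ι] {ξ : ι → ℝ} (hξ : ∑ i, ξ i = 1)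
    (v : ι → ℝ) :
    v ⬝ᵥ (Matrix.of fun i i' => (if i = i' then ξ i else 0) - ξ i * ξ i') *ᵥ v
      = pairEnergy (fun i j => ξ i * ξ j) v / 2 := by
  rw [dotProduct_of_mulVec, pairEnergy_eq]
  simp only [sub_mul, sum_sub_distrib, ite_mul, zero_mul, sum_ite_eq, mem_univ, if_true,
    ← sum_mul, ← mul_sum, hξ, mul_one, one_mul, sq, mul_assoc]
  ring

theorem dotProduct_symm_weighted_mulVec {ξ : ι → ℝ} {A : Matrix ι ι ℝ}
    (hrow : ∀ i, ∑ j, A i j = 0) (hcol : ξ ᵥ* A = 0) (v : ι → ℝ) :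
    v ⬝ᵥ (Matrix.of fun i i' => (ξ i * A i i' + A i' i * ξ i') / 2) *ᵥ v
      = -pairEnergy (fun i j => ξ i * A i j) v / 2 := by
  have hcol' : ∀ j, ∑ i, ξ i * A i j = 0 := fun j => by
    simpa [vecMul, dotProduct] using congrFun hcol j
  have hsymm : ∑ i, ∑ j, (ξ i * A i j + A j i * ξ j) / 2 * v i * v j
      = ∑ i, ∑ j, ξ i * A i j * v i * v j := by
    have hswap : ∑ i, ∑ j, A j i * ξ j * v i * v j = ∑ i, ∑ j, ξ i * A i j * v i * v j := by
      rw [sum_comm]; exact sum_congr rfl fun i _ => sum_congr rfl fun j _ => by ring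
    simp only [add_div, add_mul, sum_add_distrib, div_mul_eq_mul_div, ← sum_div, hswap]
    ring
  rw [dotProduct_of_mulVec, pairEnergy_eq, hsymm]
  simp only [← mul_sum, hrow, hcol', zero_mul, mul_zero, sum_const_zero]
  ring

theorem exists_pos_forall_le_mul (δ γ : ι → ℝ) (hγ : ∀ k, 0 < γ k) :
    ∃ c, 0 < c ∧ ∀ k, δ k ≤ c * γ k := by
  have hnn : 0 ≤ ∑ k, |δ k| / γ k := sum_nonneg fun k _ => div_nonneg (abs_nonneg _) (hγ k).le
  refine ⟨1 + ∑ k, |δ k| / γ k, by linarith, fun k => ?_⟩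
  calc δ k ≤ |δ k| / γ k * γ k := by rw [div_mul_cancel₀ _ (hγ k).ne']; exact le_abs_self _
    _ ≤ (1 + ∑ k, |δ k| / γ k) * γ k := by
      gcongr
      · exact (hγ k).le
      · linarith [single_le_sum (fun k _ => div_nonneg (abs_nonneg (δ k)) (hγ k).le) (mem_univ k)]

end

theorem stmt6_general (N n : ℕ) (A : Matrix (Fin N) (Fin N) ℝ)
    (hoff : ∀ i j, i ≠ j → 0 ≤ A i j)
    (hdiag : ∀ i, A i i = -∑ j ∈ Finset.univ.erase i, A i j)
    (hirr : ∀ S : Finset (Fin N), S.Nonempty → S ≠ Finset.univ →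
      ∃ i ∈ S, ∃ j, j ∉ S ∧ A i j ≠ 0)
    (ξ : Fin N → ℝ) (hξpos : ∀ i, 0 < ξ i) (hξsum : ∑ i, ξ i = 1)
    (hξeig : Matrix.vecMul ξ A = 0)
    (δ : Fin n → ℝ) (γ : Fin n → ℝ) (hγ : ∀ k, 0 < γ k) :
    ∃ c : ℝ, 0 < c ∧ ∀ j : Fin n, ∀ v : Fin N → ℝ,
      δ j * (v ⬝ᵥ (Matrix.of fun i i' =>
          (if i = i' then ξ i else 0) - ξ i * ξ i').mulVec v)
        + c * γ j * (v ⬝ᵥ (Matrix.of fun i i' =>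
            (ξ i * A i i' + A i' i * ξ i') / 2).mulVec v) ≤ 0 := by
  have hrow : ∀ i, ∑ j, A i j = 0 := fun i => by
    rw [← add_sum_erase _ _ (mem_univ i), hdiag i]; ring
  have hξξ : ∀ i j, i ≠ j → 0 ≤ ξ i * ξ j := fun i j _ => (mul_pos (hξpos i) (hξpos j)).le
  have hξA : ∀ i j, i ≠ j → 0 ≤ ξ i * A i j := fun i j hij =>
    mul_nonneg (hξpos i).le (hoff i j hij)
  obtain ⟨K, hK⟩ := exists_pairEnergy_le_mul (fun i j => ξ i * ξ j) _ hξA fun S hS hSU => by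
    obtain ⟨i, hi, j, hj, hij⟩ := hirr S hS hSU
    exact ⟨i, hi, j, hj, mul_ne_zero (hξpos i).ne' hij⟩
  obtain ⟨c, hc, hcK⟩ := exists_pos_forall_le_mul (fun j => K * δ j) γ hγ
  refine ⟨c, hc, fun j v => ?_⟩
  rw [dotProduct_diag_sub_outer_mulVec hξsum, dotProduct_symm_weighted_mulVec hrow hξeig]
  have hG := pairEnergy_nonneg hξξ v
  have hE := pairEnergy_nonneg hξA v
  have key : δ j * pairEnergy (fun i j => ξ i * ξ j) v
      ≤ c * γ j * pairEnergy (fun i j => ξ i * A i j) v := by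
    rcases le_or_gt (δ j) 0 with hδ | hδ
    · linarith [mul_nonpos_of_nonpos_of_nonneg hδ hG, mul_nonneg (mul_nonneg hc.le (hγ j).le) hE]
    · linarith [mul_le_mul_of_nonneg_left (hK v) hδ.le, mul_le_mul_of_nonneg_right (hcK j) hE]
  linarith

/-- For an irreducible A ∈ A1 (N ≥ 2) with normalized positive left
0-eigenvector ξ, U = Ξ − ξξᵀ, any diagonal Δ = diag(δ₁,…,δₙ) and positive diagonal
Γ = diag(γ₁,…,γₙ), there exists c > 0 such that for every j and every v ∈ ℝ^N,
δⱼ vᵀUv + c γⱼ vᵀ((ΞA + AᵀΞ)/2)v ≤ 0. -/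
theorem stmt6 (N n : ℕ) (hN : 2 ≤ N) (A : Matrix (Fin N) (Fin N) ℝ)
    (hoff : ∀ i j, i ≠ j → 0 ≤ A i j)
    (hdiag : ∀ i, A i i = -∑ j ∈ Finset.univ.erase i, A i j)
    (hirr : ∀ S : Finset (Fin N), S.Nonempty → S ≠ Finset.univ →
      ∃ i ∈ S, ∃ j, j ∉ S ∧ A i j ≠ 0)
    (ξ : Fin N → ℝ) (hξpos : ∀ i, 0 < ξ i) (hξsum : ∑ i, ξ i = 1)
    (hξeig : Matrix.vecMul ξ A = 0)
    (δ : Fin n → ℝ) (γ : Fin n → ℝ) (hγ : ∀ k, 0 < γ k) :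
    ∃ c : ℝ, 0 < c ∧ ∀ j : Fin n, ∀ v : Fin N → ℝ,
      δ j * (v ⬝ᵥ (Matrix.of fun i i' =>
          (if i = i' then ξ i else 0) - ξ i * ξ i').mulVec v)
        + c * γ j * (v ⬝ᵥ (Matrix.of fun i i' =>
            (ξ i * A i i' + A i' i * ξ i') / 2).mulVec v) ≤ 0 :=
  stmt6_general N n A hoff hdiag hirr ξ hξpos hξsum hξeig δ γ hγ
end

section
/- Let N ≥ 2, let A be an irreducible N×N real matrix satisfying Condition A1 with normalized positive left eigenvector ξ, Ξ = diag(ξ), U = Ξ − ξξ^T, and let Ã be any irreducible N×N matrix satisfying Condition A2. Let Δ = diag(δ_1,…,δ_n) be any diagonal matrix and Γ = diag(γ_1,…,γ_n) with all γ_j > 0. Then there exist constants c > 0 and η > 0 such that both U ⊗ Δ + cη (Ã ⊗ I_n) and ((Ξ A + A^T Ξ)/2) ⊗ Γ − η (Ã ⊗ I_n) are negative semidefinite. -/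
/-!
All matrices involved have zero row and column sums, so their quadratic forms do not change when a
constant vector is added, and it suffices to test them on vectors with zero sum. For an irreducible
matrix `M` with nonnegative off-diagonal entries and zero row and column sums,
`zᵀ M z = -½ ∑ᵢⱼ Mᵢⱼ (zᵢ - zⱼ)²`, which is negative unless `z` is constant; by compactness of the
unit sphere, `zᵀ M z ≤ -μ ‖z‖²` on zero-sum vectors for some `μ > 0`. This applies to `Ã` and to
`(ΞA + AᵀΞ)/2`, which inherits irreducibility from `A` because `ξ > 0`, and whose column sums vanish
because `ξᵀ A = 0`. Both Kronecker forms split into one form per block `k`; there the uniformly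
negative part dominates the other one as soon as `c η μ_Ã ≥ |δₖ| ∑ᵢⱼ |Uᵢⱼ|` and
`γₖ μ ≥ η ∑ᵢⱼ |Ãᵢⱼ|`, which fixes `η` first and then `c`.
-/

open Matrix Finset

section QuadraticForm

variable {ι : Type*} [Fintype ι]

lemma exists_add_smul_one_sum_eq_zero (y : ι → ℝ) : ∃ t : ℝ, ∑ i, (y + t • 1) i = 0 := by
  rcases isEmpty_or_nonempty ι with _ | _
  · exact ⟨0, by simp⟩
  · refine ⟨-(∑ i, y i) / Fintype.card ι, ?_⟩
    have : (Fintype.card ι : ℝ) ≠ 0 := by positivity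
    simp only [Pi.add_apply, Pi.smul_apply, Pi.one_apply, smul_eq_mul, mul_one, sum_add_distrib,
      sum_const, card_univ, nsmul_eq_mul]
    field_simp
    ring

lemma exists_ne_of_sum_eq_zero {z : ι → ℝ} (hz : ∑ i, z i = 0) (hz0 : z ≠ 0) :
    ∃ a b, z a ≠ z b := by
  obtain ⟨a, ha⟩ := Function.ne_iff.1 hz0
  by_contra! hconst
  rw [sum_congr rfl fun b _ => (hconst a b).symm, sum_const, nsmul_eq_mul] at hz
  have : (Fintype.card ι : ℝ) ≠ 0 := Nat.cast_ne_zero.2 (Fintype.card_pos_iff.2 ⟨a⟩).ne'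
  exact ha (by simpa [this] using hz)

lemma mulVec_one_eq_zero_of_diag [DecidableEq ι] {M : Matrix ι ι ℝ}
    (hdiag : ∀ i, M i i = -∑ j ∈ univ.erase i, M i j) : M *ᵥ 1 = 0 := by
  ext i
  simp only [mulVec, dotProduct, Pi.one_apply, mul_one, Pi.zero_apply]
  rw [← add_sum_erase _ _ (mem_univ i), hdiag]
  ring

lemma one_vecMul_eq_zero_of_isSymm {M : Matrix ι ι ℝ} (hS : M.IsSymm) (hM : M *ᵥ 1 = 0) :
    1 ᵥ* M = 0 := by
  rw [← hS.eq, vecMul_transpose, hM]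

lemma dotProduct_mulVec_self_eq_sum (M : Matrix ι ι ℝ) (z : ι → ℝ) :
    z ⬝ᵥ M *ᵥ z = ∑ i, ∑ j, M i j * z i * z j := by
  simp only [dotProduct, mulVec, mul_sum]
  exact sum_congr rfl fun i _ => sum_congr rfl fun j _ => by ring

lemma abs_dotProduct_mulVec_self_le (M : Matrix ι ι ℝ) (z : ι → ℝ) :
    |z ⬝ᵥ M *ᵥ z| ≤ (∑ i, ∑ j, |M i j|) * ‖z‖ ^ 2 := by
  rw [dotProduct_mulVec_self_eq_sum, sum_mul]
  refine (abs_sum_le_sum_abs _ _).trans (sum_le_sum fun i _ => ?_)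
  rw [sum_mul]
  refine (abs_sum_le_sum_abs _ _).trans (sum_le_sum fun j _ => ?_)
  rw [abs_mul, abs_mul, mul_assoc, sq]
  gcongr
  · exact (Real.norm_eq_abs (z i)).symm.trans_le (norm_le_pi_norm z i)
  · exact (Real.norm_eq_abs (z j)).symm.trans_le (norm_le_pi_norm z j)

lemma dotProduct_mulVec_add_smul_one {M : Matrix ι ι ℝ} (hM : M *ᵥ 1 = 0) (hM' : 1 ᵥ* M = 0)
    (y : ι → ℝ) (t : ℝ) : (y + t • 1) ⬝ᵥ M *ᵥ (y + t • 1) = y ⬝ᵥ M *ᵥ y := by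
  rw [mulVec_add, mulVec_smul, hM, smul_zero, add_zero, add_dotProduct, smul_dotProduct,
    dotProduct_mulVec 1, hM', zero_dotProduct, smul_zero, add_zero]

lemma dotProduct_mulVec_nonpos_of_sum_eq_zero {M : Matrix ι ι ℝ} (hM : M *ᵥ 1 = 0)
    (hM' : 1 ᵥ* M = 0) (h : ∀ z : ι → ℝ, ∑ i, z i = 0 → z ⬝ᵥ M *ᵥ z ≤ 0) (y : ι → ℝ) :
    y ⬝ᵥ M *ᵥ y ≤ 0 := by
  obtain ⟨t, ht⟩ := exists_add_smul_one_sum_eq_zero y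
  rw [← dotProduct_mulVec_add_smul_one hM hM' y t]
  exact h _ ht

lemma exists_dotProduct_mulVec_le_neg_mul_norm_sq_of_neg {M : Matrix ι ι ℝ}
    (h : ∀ z : ι → ℝ, ∑ i, z i = 0 → z ≠ 0 → z ⬝ᵥ M *ᵥ z < 0) :
    ∃ μ > 0, ∀ z : ι → ℝ, ∑ i, z i = 0 → z ⬝ᵥ M *ᵥ z ≤ -(μ * ‖z‖ ^ 2) := by
  set K : Set (ι → ℝ) := {z | ∑ i, z i = 0} ∩ Metric.sphere 0 1
  have hK : IsCompact K :=
    (isCompact_sphere 0 1).inter_left (isClosed_eq (by fun_prop) continuous_const)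
  obtain ⟨μ, hμ, hμK⟩ := hK.exists_forall_le' (f := fun z => -(z ⬝ᵥ M *ᵥ z))
    (by fun_prop) fun z hz => neg_pos.2 <| h z hz.1 (ne_zero_of_mem_unit_sphere ⟨z, hz.2⟩)
  refine ⟨μ, hμ, fun z hz => ?_⟩
  rcases eq_or_ne z 0 with rfl | hz0
  · simp
  have hn : 0 < ‖z‖ := norm_pos_iff.2 hz0
  have hw : ‖z‖⁻¹ • z ∈ K := by
    refine ⟨?_, ?_⟩
    · simp [← mul_sum, hz]
    · simp [norm_smul, hn.ne']
  have hμz := hμK _ hw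
  rw [smul_dotProduct, mulVec_smul, dotProduct_smul, smul_eq_mul, smul_eq_mul] at hμz
  have : μ * ‖z‖ ^ 2 ≤ -(z ⬝ᵥ M *ᵥ z) :=
    calc μ * ‖z‖ ^ 2 ≤ -(‖z‖⁻¹ * (‖z‖⁻¹ * z ⬝ᵥ M *ᵥ z)) * ‖z‖ ^ 2 := by gcongr
      _ = -(z ⬝ᵥ M *ᵥ z) := by field_simp
  linarith

lemma sum_mul_sub_sq_eq_neg_two_mul_dotProduct_mulVec {M : Matrix ι ι ℝ} (hM : M *ᵥ 1 = 0)
    (hM' : 1 ᵥ* M = 0) (z : ι → ℝ) : ∑ i, ∑ j, M i j * (z i - z j) ^ 2 = -2 * (z ⬝ᵥ M *ᵥ z) := by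
  have hrow : ∀ i, ∑ j, M i j = 0 := fun i => by simpa [mulVec, dotProduct] using congrFun hM i
  have hcol : ∀ j, ∑ i, M i j = 0 := fun j => by simpa [vecMul, dotProduct] using congrFun hM' j
  have hrow' : ∑ i, ∑ j, M i j * z i ^ 2 = 0 := by simp [← sum_mul, hrow]
  have hcol' : ∑ i, ∑ j, M i j * z j ^ 2 = 0 := by rw [sum_comm]; simp [← sum_mul, hcol]
  calc ∑ i, ∑ j, M i j * (z i - z j) ^ 2
      = ∑ i, ∑ j, M i j * z i ^ 2 + ∑ i, ∑ j, M i j * z j ^ 2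
          - 2 * ∑ i, ∑ j, M i j * z i * z j := by
        simp only [← sum_add_distrib, mul_sum, ← sum_sub_distrib]
        exact sum_congr rfl fun i _ => sum_congr rfl fun j _ => by ring
    _ = -2 * (z ⬝ᵥ M *ᵥ z) := by rw [hrow', hcol', dotProduct_mulVec_self_eq_sum]; ring

-- Condition A2 with irreducibility, symmetry weakened to vanishing column sums.
structure IsIrreducibleBalancedGenerator (M : Matrix ι ι ℝ) : Prop where
  nonneg_of_ne : ∀ i j, i ≠ j → 0 ≤ M i j
  mulVec_one : M *ᵥ 1 = 0
  one_vecMul : 1 ᵥ* M = 0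
  irreducible : ∀ S : Finset ι, S.Nonempty → S ≠ univ → ∃ i ∈ S, ∃ j ∉ S, M i j ≠ 0

namespace IsIrreducibleBalancedGenerator

variable {M : Matrix ι ι ℝ}

lemma dotProduct_mulVec_neg (hM : IsIrreducibleBalancedGenerator M) {z : ι → ℝ} {a b : ι}
    (hab : z a ≠ z b) : z ⬝ᵥ M *ᵥ z < 0 := by
  have hterm : ∀ i j, 0 ≤ M i j * (z i - z j) ^ 2 := fun i j => by
    rcases eq_or_ne i j with rfl | hij
    · simp
    · exact mul_nonneg (hM.nonneg_of_ne i j hij) (sq_nonneg _)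
  let S := univ.filter fun i => z i = z a
  obtain ⟨i, hi, j, hj, hMij⟩ := hM.irreducible S ⟨a, by simp [S]⟩
    fun h => hab.symm (by simpa [S] using (h ▸ mem_univ b : b ∈ S))
  simp only [S, mem_filter, mem_univ, true_and] at hi hj
  have hij : i ≠ j := by rintro rfl; exact hj hi
  have hzij : z i - z j ≠ 0 := sub_ne_zero.2 (hi.trans_ne (Ne.symm hj))
  have hpos : 0 < M i j * (z i - z j) ^ 2 :=
    mul_pos ((hM.nonneg_of_ne i j hij).lt_of_ne' hMij) (by positivity)
  have : 0 < ∑ i, ∑ j, M i j * (z i - z j) ^ 2 :=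
    sum_pos' (fun i _ => sum_nonneg fun j _ => hterm i j)
      ⟨i, mem_univ i, sum_pos' (fun j _ => hterm i j) ⟨j, mem_univ j, hpos⟩⟩
  rw [sum_mul_sub_sq_eq_neg_two_mul_dotProduct_mulVec hM.mulVec_one hM.one_vecMul] at this
  linarith

lemma exists_dotProduct_mulVec_le_neg_mul_norm_sq (hM : IsIrreducibleBalancedGenerator M) :
    ∃ μ > 0, ∀ z : ι → ℝ, ∑ i, z i = 0 → z ⬝ᵥ M *ᵥ z ≤ -(μ * ‖z‖ ^ 2) :=
  exists_dotProduct_mulVec_le_neg_mul_norm_sq_of_neg fun _ hz hz0 =>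
    let ⟨_, _, hab⟩ := exists_ne_of_sum_eq_zero hz hz0
    hM.dotProduct_mulVec_neg hab

end IsIrreducibleBalancedGenerator

lemma isIrreducibleBalancedGenerator_of_isSymm [DecidableEq ι] {M : Matrix ι ι ℝ} (hS : M.IsSymm)
    (hoff : ∀ i j, i ≠ j → 0 ≤ M i j) (hdiag : ∀ i, M i i = -∑ j ∈ univ.erase i, M i j)
    (hirr : ∀ S : Finset ι, S.Nonempty → S ≠ univ → ∃ i ∈ S, ∃ j, j ∉ S ∧ M i j ≠ 0) :
    IsIrreducibleBalancedGenerator M where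
  nonneg_of_ne := hoff
  mulVec_one := mulVec_one_eq_zero_of_diag hdiag
  one_vecMul := one_vecMul_eq_zero_of_isSymm hS (mulVec_one_eq_zero_of_diag hdiag)
  irreducible := hirr

lemma isIrreducibleBalancedGenerator_symmetrize {A : Matrix ι ι ℝ}
    (hoff : ∀ i j, i ≠ j → 0 ≤ A i j) (hA : A *ᵥ 1 = 0)
    (hirr : ∀ S : Finset ι, S.Nonempty → S ≠ univ → ∃ i ∈ S, ∃ j ∉ S, A i j ≠ 0)
    {ξ : ι → ℝ} (hξ : ∀ i, 0 < ξ i) (hξA : ξ ᵥ* A = 0) :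
    IsIrreducibleBalancedGenerator (of fun i j => (ξ i * A i j + A j i * ξ j) / 2) := by
  have hS : (of fun i j => (ξ i * A i j + A j i * ξ j) / 2).IsSymm :=
    IsSymm.ext fun i j => by simp only [of_apply]; ring
  have hrow : ∀ i, ∑ j, A i j = 0 := fun i => by simpa [mulVec, dotProduct] using congrFun hA i
  have hcol : ∀ i, ∑ j, A j i * ξ j = 0 := fun i => by
    simpa [vecMul, dotProduct, mul_comm] using congrFun hξA i
  have h1 : (of fun i j => (ξ i * A i j + A j i * ξ j) / 2) *ᵥ 1 = 0 := by
    ext i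
    simp [mulVec, dotProduct, ← sum_div, sum_add_distrib, ← mul_sum, hrow, hcol]
  refine ⟨fun i j hij => ?_, h1, one_vecMul_eq_zero_of_isSymm hS h1, fun S hS hSu => ?_⟩
  · have := mul_nonneg (hξ i).le (hoff i j hij)
    have := mul_nonneg (hoff j i hij.symm) (hξ j).le
    simp only [of_apply]
    positivity
  · obtain ⟨i, hi, j, hj, hAij⟩ := hirr S hS hSu
    have hij : i ≠ j := by rintro rfl; exact hj hi
    refine ⟨i, hi, j, hj, ne_of_gt ?_⟩
    have := mul_pos (hξ i) ((hoff i j hij).lt_of_ne' hAij)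
    have := mul_nonneg (hoff j i hij.symm) (hξ j).le
    simp only [of_apply]
    positivity

lemma dotProduct_mulVec_smul_add_smul_nonpos {P M : Matrix ι ι ℝ} (hP : P *ᵥ 1 = 0)
    (hP' : 1 ᵥ* P = 0) (hM : M *ᵥ 1 = 0) (hM' : 1 ᵥ* M = 0) {μ : ℝ}
    (hgap : ∀ z : ι → ℝ, ∑ i, z i = 0 → z ⬝ᵥ M *ᵥ z ≤ -(μ * ‖z‖ ^ 2)) {a b : ℝ} (hb : 0 ≤ b)
    (hab : |a| * ∑ i, ∑ j, |P i j| ≤ b * μ) (y : ι → ℝ) :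
    y ⬝ᵥ (a • P + b • M) *ᵥ y ≤ 0 := by
  refine dotProduct_mulVec_nonpos_of_sum_eq_zero ?_ ?_ (fun z hz => ?_) y
  · simp [add_mulVec, smul_mulVec, hP, hM]
  · simp [vecMul_add, vecMul_smul, hP', hM']
  rw [add_mulVec, smul_mulVec, smul_mulVec, dotProduct_add, dotProduct_smul, dotProduct_smul,
    smul_eq_mul, smul_eq_mul]
  have hPz : a * (z ⬝ᵥ P *ᵥ z) ≤ |a| * (∑ i, ∑ j, |P i j|) * ‖z‖ ^ 2 := by
    calc a * (z ⬝ᵥ P *ᵥ z) ≤ |a| * |z ⬝ᵥ P *ᵥ z| := (le_abs_self _).trans (abs_mul _ _).le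
      _ ≤ |a| * (∑ i, ∑ j, |P i j|) * ‖z‖ ^ 2 := by
        rw [mul_assoc]; gcongr; exact abs_dotProduct_mulVec_self_le P z
  have hMz := mul_le_mul_of_nonneg_left (hgap z hz) hb
  nlinarith [mul_le_mul_of_nonneg_right hab (sq_nonneg ‖z‖)]

-- The quadratic form of `∑ₖ Fₖ ⊗ Eₖₖ` on stacked vectors splits into one form per block.
lemma sum_sum_sum_mul_mul_nonpos {κ : Type*} [Fintype κ] (F : ι → ι → κ → ℝ)
    (hF : ∀ k (y : ι → ℝ), y ⬝ᵥ of (fun i j => F i j k) *ᵥ y ≤ 0) (x : ι → κ → ℝ) :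
    ∑ i, ∑ j, ∑ k, F i j k * x i k * x j k ≤ 0 := by
  have hx : ∀ k, (fun i => x i k) ⬝ᵥ of (fun i j => F i j k) *ᵥ (fun i => x i k)
      = ∑ i, ∑ j, F i j k * x i k * x j k := fun k => dotProduct_mulVec_self_eq_sum _ _
  rw [sum_congr rfl fun i _ => sum_comm, sum_comm]
  exact sum_nonpos fun k _ => hx k ▸ hF k _

lemma diagonal_sub_vecMulVec_mulVec_one [DecidableEq ι] {ξ : ι → ℝ} (hξ : ∑ i, ξ i = 1) :
    (diagonal ξ - vecMulVec ξ ξ) *ᵥ 1 = 0 := by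
  ext i
  simp [mulVec, dotProduct, diagonal_apply, vecMulVec_apply, ← mul_sum, hξ]

lemma one_vecMul_diagonal_sub_vecMulVec [DecidableEq ι] {ξ : ι → ℝ} (hξ : ∑ i, ξ i = 1) :
    1 ᵥ* (diagonal ξ - vecMulVec ξ ξ) = 0 :=
  one_vecMul_eq_zero_of_isSymm (by simp [IsSymm, transpose_sub, transpose_vecMulVec])
    (diagonal_sub_vecMulVec_mulVec_one hξ)

end QuadraticForm

theorem stmt7_general (N n : ℕ) (A : Matrix (Fin N) (Fin N) ℝ)
    (hoff : ∀ i j, i ≠ j → 0 ≤ A i j)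
    (hdiag : ∀ i, A i i = -∑ j ∈ Finset.univ.erase i, A i j)
    (hirr : ∀ S : Finset (Fin N), S.Nonempty → S ≠ Finset.univ →
      ∃ i ∈ S, ∃ j, j ∉ S ∧ A i j ≠ 0)
    (ξ : Fin N → ℝ) (hξpos : ∀ i, 0 < ξ i) (hξsum : ∑ i, ξ i = 1)
    (hξeig : Matrix.vecMul ξ A = 0)
    (At : Matrix (Fin N) (Fin N) ℝ)
    (hAtsym : ∀ i j, At i j = At j i)
    (hAtoff : ∀ i j, i ≠ j → 0 ≤ At i j)
    (hAtdiag : ∀ i, At i i = -∑ j ∈ Finset.univ.erase i, At i j)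
    (hAtirr : ∀ S : Finset (Fin N), S.Nonempty → S ≠ Finset.univ →
      ∃ i ∈ S, ∃ j, j ∉ S ∧ At i j ≠ 0)
    (δ : Fin n → ℝ) (γ : Fin n → ℝ) (hγ : ∀ k, 0 < γ k) :
    ∃ c : ℝ, 0 < c ∧ ∃ η : ℝ, 0 < η ∧
      (∀ x : Fin N → Fin n → ℝ,
        ∑ i, ∑ j, ∑ k,
            (((if i = j then ξ i else 0) - ξ i * ξ j) * δ k + c * η * At i j)
              * x i k * x j k ≤ 0) ∧
      (∀ x : Fin N → Fin n → ℝ,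
        ∑ i, ∑ j, ∑ k,
            (((ξ i * A i j + A j i * ξ j) / 2) * γ k - η * At i j)
              * x i k * x j k ≤ 0) := by
  have hAt := isIrreducibleBalancedGenerator_of_isSymm (IsSymm.ext fun i j => hAtsym j i)
    hAtoff hAtdiag hAtirr
  have hB := isIrreducibleBalancedGenerator_symmetrize hoff (mulVec_one_eq_zero_of_diag hdiag)
    hirr hξpos hξeig
  obtain ⟨μ₁, hμ₁, hgap₁⟩ := hAt.exists_dotProduct_mulVec_le_neg_mul_norm_sq
  obtain ⟨μ₂, hμ₂, hgap₂⟩ := hB.exists_dotProduct_mulVec_le_neg_mul_norm_sq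
  obtain ⟨⟨γ₀, hγ₀ : 0 < γ₀⟩, hγ₀le⟩ := Finite.exists_ge fun k => (⟨γ k, hγ k⟩ : Set.Ioi (0 : ℝ))
  set LU := ∑ i, ∑ j, |(diagonal ξ - vecMulVec ξ ξ) i j|
  set LAt := ∑ i, ∑ j, |At i j|
  set D := ∑ k, |δ k|
  set η := γ₀ * μ₂ / (LAt + 1)
  have hη : 0 < η := by positivity
  refine ⟨(D * LU + 1) / (η * μ₁), by positivity, η, hη, fun x => ?_, fun x => ?_⟩
  · refine sum_sum_sum_mul_mul_nonpos _ (fun k y => ?_) x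
    convert dotProduct_mulVec_smul_add_smul_nonpos (diagonal_sub_vecMulVec_mulVec_one hξsum)
      (one_vecMul_diagonal_sub_vecMulVec hξsum) hAt.mulVec_one hAt.one_vecMul hgap₁
      (a := δ k) (b := (D * LU + 1) / (η * μ₁) * η) (by positivity) ?_ y using 3
    · ext i j; simp [diagonal_apply, vecMulVec_apply]; ring
    · have hδ : |δ k| ≤ D := single_le_sum (fun k _ => abs_nonneg (δ k)) (mem_univ k)
      calc |δ k| * LU ≤ D * LU + 1 := by nlinarith [show 0 ≤ LU by positivity]
        _ = (D * LU + 1) / (η * μ₁) * η * μ₁ := by field_simp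
  · refine sum_sum_sum_mul_mul_nonpos _ (fun k y => ?_) x
    convert dotProduct_mulVec_smul_add_smul_nonpos hAt.mulVec_one hAt.one_vecMul hB.mulVec_one
      hB.one_vecMul hgap₂ (a := -η) (b := γ k) (hγ k).le ?_ y using 3
    · ext i j; simp; ring
    · calc |-η| * LAt ≤ η * (LAt + 1) := by rw [abs_neg, abs_of_pos hη]; nlinarith
        _ = γ₀ * μ₂ := div_mul_cancel₀ _ (by positivity)
        _ ≤ γ k * μ₂ := by gcongr; exact hγ₀le k

/-- Let A be an irreducible matrix satisfying Condition A1 (N ≥ 2) with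
normalized positive left 0-eigenvector ξ, U = Ξ − ξξᵀ, and let Ã be any irreducible
matrix satisfying Condition A2. For any diagonal Δ = diag(δ₁,…,δₙ) and positive
diagonal Γ = diag(γ₁,…,γₙ), there exist c > 0 and η > 0 such that both
U ⊗ Δ + cη (Ã ⊗ Iₙ) and ((ΞA + AᵀΞ)/2) ⊗ Γ − η (Ã ⊗ Iₙ) are negative semidefinite,
expressed via their quadratic forms on stacked block vectors x = (x₁ᵀ,…,x_Nᵀ)ᵀ. -/
theorem stmt7 (N n : ℕ) (hN : 2 ≤ N) (A : Matrix (Fin N) (Fin N) ℝ)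
    (hoff : ∀ i j, i ≠ j → 0 ≤ A i j)
    (hdiag : ∀ i, A i i = -∑ j ∈ Finset.univ.erase i, A i j)
    (hirr : ∀ S : Finset (Fin N), S.Nonempty → S ≠ Finset.univ →
      ∃ i ∈ S, ∃ j, j ∉ S ∧ A i j ≠ 0)
    (ξ : Fin N → ℝ) (hξpos : ∀ i, 0 < ξ i) (hξsum : ∑ i, ξ i = 1)
    (hξeig : Matrix.vecMul ξ A = 0)
    (At : Matrix (Fin N) (Fin N) ℝ)
    (hAtsym : ∀ i j, At i j = At j i)
    (hAtoff : ∀ i j, i ≠ j → 0 ≤ At i j)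
    (hAtdiag : ∀ i, At i i = -∑ j ∈ Finset.univ.erase i, At i j)
    (hAtirr : ∀ S : Finset (Fin N), S.Nonempty → S ≠ Finset.univ →
      ∃ i ∈ S, ∃ j, j ∉ S ∧ At i j ≠ 0)
    (δ : Fin n → ℝ) (γ : Fin n → ℝ) (hγ : ∀ k, 0 < γ k) :
    ∃ c : ℝ, 0 < c ∧ ∃ η : ℝ, 0 < η ∧
      (∀ x : Fin N → Fin n → ℝ,
        ∑ i, ∑ j, ∑ k,
            (((if i = j then ξ i else 0) - ξ i * ξ j) * δ k + c * η * At i j)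
              * x i k * x j k ≤ 0) ∧
      (∀ x : Fin N → Fin n → ℝ,
        ∑ i, ∑ j, ∑ k,
            (((ξ i * A i j + A j i * ξ j) / 2) * γ k - η * At i j)
              * x i k * x j k ≤ 0) :=
  stmt7_general N n A hoff hdiag hirr ξ hξpos hξsum hξeig At hAtsym hAtoff hAtdiag hAtirr δ γ hγ
end

section
/- Let N ≥ 2 and let A = (a_{jk}) be a symmetric N×N real matrix with nonnegative off-diagonal entries and zero row sums. Let β > 0 and let g : ℝ → ℝ satisfy (g(u) − g(v))/(u − v) ≥ β for all u ≠ v. Then for every x ∈ ℝ^N, writing g(x) = (g(x_1),…,g(x_N))^T, one has x^T A g(x) ≤ β x^T A x (and in particular x^T A g(x) ≤ 0). -/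
/-!
Because the rows of `A` sum to zero and `A` is symmetric, the bilinear form `xᵀ A y` equals
`-½ ∑_{j,k} a_{jk} (x_j - x_k)(y_j - y_k)`. The slope bound on `g` gives
`β (u - v)² ≤ (u - v)(g u - g v)`, so with `a_{jk} ≥ 0` the sum for `y = g(x)` dominates
`β` times the sum for `y = x`, which is itself nonnegative.
-/

open Matrix

namespace Matrix

variable {ι R : Type*} [Fintype ι]

theorem two_mul_dotProduct_mulVec_eq_neg_sum [CommRing R] {A : Matrix ι ι R} (hA : A.IsSymm)
    (hrow : ∀ j, ∑ k, A j k = 0) (x y : ι → R) :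
    2 * (x ⬝ᵥ A *ᵥ y) = -∑ j, ∑ k, A j k * (x j - x k) * (y j - y k) := by
  have hcol : ∀ k, ∑ j, A j k = 0 := fun k => by simpa only [hA.apply] using hrow k
  have hdiag_left : ∑ j, ∑ k, A j k * x j * y j = 0 := by
    simp only [mul_assoc, ← Finset.sum_mul, hrow, zero_mul, Finset.sum_const_zero]
  have hdiag_right : ∑ j, ∑ k, A j k * x k * y k = 0 := by
    rw [Finset.sum_comm]
    simp only [mul_assoc, ← Finset.sum_mul, hcol, zero_mul, Finset.sum_const_zero]
  have hcross : ∑ j, ∑ k, A j k * x k * y j = x ⬝ᵥ A *ᵥ y := by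
    rw [Finset.sum_comm]
    simp only [dotProduct, mulVec, Finset.mul_sum, hA.apply]
    exact Fintype.sum_congr _ _ fun j => Fintype.sum_congr _ _ fun k => by ring
  have hcross' : ∑ j, ∑ k, A j k * x j * y k = x ⬝ᵥ A *ᵥ y := by
    simp only [dotProduct, mulVec, Finset.mul_sum]
    exact Fintype.sum_congr _ _ fun j => Fintype.sum_congr _ _ fun k => by ring
  have hexpand : ∑ j, ∑ k, A j k * (x j - x k) * (y j - y k)
      = ∑ j, ∑ k, A j k * x j * y j + ∑ j, ∑ k, A j k * x k * y k
        - ∑ j, ∑ k, A j k * x j * y k - ∑ j, ∑ k, A j k * x k * y j := by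
    simp only [← Finset.sum_add_distrib, ← Finset.sum_sub_distrib]
    exact Fintype.sum_congr _ _ fun j => Fintype.sum_congr _ _ fun k => by ring
  rw [hexpand, hdiag_left, hdiag_right, hcross, hcross']
  ring

variable [CommRing R] [LinearOrder R] [IsStrictOrderedRing R] {A : Matrix ι ι R}

theorem dotProduct_mulVec_le_mul_of_forall (hA : A.IsSymm) (hrow : ∀ j, ∑ k, A j k = 0)
    (hoff : ∀ j k, j ≠ k → 0 ≤ A j k) (β : R) (x y : ι → R)
    (hxy : ∀ j k, β * (x j - x k) ^ 2 ≤ (x j - x k) * (y j - y k)) :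
    x ⬝ᵥ A *ᵥ y ≤ β * (x ⬝ᵥ A *ᵥ x) := by
  have hterm : ∀ j k,
      β * (A j k * (x j - x k) * (x j - x k)) ≤ A j k * (x j - x k) * (y j - y k) := by
    intro j k
    rcases eq_or_ne j k with rfl | hjk
    · simp
    · calc _ = A j k * (β * (x j - x k) ^ 2) := by ring
        _ ≤ A j k * ((x j - x k) * (y j - y k)) :=
          mul_le_mul_of_nonneg_left (hxy j k) (hoff j k hjk)
        _ = _ := by ring
  have hsum : β * ∑ j, ∑ k, A j k * (x j - x k) * (x j - x k)
      ≤ ∑ j, ∑ k, A j k * (x j - x k) * (y j - y k) := by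
    simp only [Finset.mul_sum]
    exact Finset.sum_le_sum fun j _ => Finset.sum_le_sum fun k _ => hterm j k
  have h2y := two_mul_dotProduct_mulVec_eq_neg_sum hA hrow x y
  have h2x := congrArg (β * ·) (two_mul_dotProduct_mulVec_eq_neg_sum hA hrow x x)
  linarith

theorem dotProduct_mulVec_self_nonpos (hA : A.IsSymm) (hrow : ∀ j, ∑ k, A j k = 0)
    (hoff : ∀ j k, j ≠ k → 0 ≤ A j k) (x : ι → R) : x ⬝ᵥ A *ᵥ x ≤ 0 := by
  simpa using dotProduct_mulVec_le_mul_of_forall hA hrow hoff 0 x x fun j k => by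
    simpa [← sq] using sq_nonneg (x j - x k)

end Matrix

theorem mul_sq_sub_le_of_le_slope {β : ℝ} {g : ℝ → ℝ}
    (hg : ∀ u v : ℝ, u ≠ v → β ≤ (g u - g v) / (u - v)) (u v : ℝ) :
    β * (u - v) ^ 2 ≤ (u - v) * (g u - g v) := by
  rcases eq_or_ne u v with rfl | huv
  · simp
  have hpos : 0 < (u - v) ^ 2 := by positivity [sub_ne_zero.mpr huv]
  calc β * (u - v) ^ 2 ≤ (g u - g v) / (u - v) * (u - v) ^ 2 :=
        mul_le_mul_of_nonneg_right (hg u v huv) hpos.le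
    _ = (u - v) * (g u - g v) := by field_simp [sub_ne_zero.mpr huv]

theorem stmt9_general (N : ℕ) (A : Matrix (Fin N) (Fin N) ℝ)
    (hsym : ∀ j k, A j k = A k j)
    (hoff : ∀ j k, j ≠ k → 0 ≤ A j k)
    (hdiag : ∀ j, A j j = -∑ k ∈ Finset.univ.erase j, A j k)
    (β : ℝ) (hβ : 0 < β) (g : ℝ → ℝ)
    (hg : ∀ u v : ℝ, u ≠ v → β ≤ (g u - g v) / (u - v)) :
    ∀ x : Fin N → ℝ,
      x ⬝ᵥ A.mulVec (fun i => g (x i)) ≤ β * (x ⬝ᵥ A.mulVec x) ∧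
      x ⬝ᵥ A.mulVec (fun i => g (x i)) ≤ 0 := by
  intro x
  have hA : A.IsSymm := IsSymm.ext fun j k => hsym k j
  have hrow : ∀ j, ∑ k, A j k = 0 := fun j => by
    rw [← Finset.add_sum_erase _ _ (Finset.mem_univ j), hdiag j, neg_add_cancel]
  have hle : x ⬝ᵥ A *ᵥ (fun i => g (x i)) ≤ β * (x ⬝ᵥ A *ᵥ x) :=
    dotProduct_mulVec_le_mul_of_forall hA hrow hoff β x _ fun j k =>
      mul_sq_sub_le_of_le_slope hg (x j) (x k)
  exact ⟨hle, hle.trans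
    (mul_nonpos_of_nonneg_of_nonpos hβ.le (dotProduct_mulVec_self_nonpos hA hrow hoff x))⟩

/-- Let A be a symmetric N×N matrix with nonnegative off-diagonal entries
and zero row sums, β > 0, and g : ℝ → ℝ with (g(u) − g(v))/(u − v) ≥ β for all u ≠ v.
Then for every x ∈ ℝ^N, with g acting componentwise,
xᵀ A g(x) ≤ β xᵀ A x, and in particular xᵀ A g(x) ≤ 0. -/
theorem stmt9 (N : ℕ) (hN : 2 ≤ N) (A : Matrix (Fin N) (Fin N) ℝ)
    (hsym : ∀ j k, A j k = A k j)
    (hoff : ∀ j k, j ≠ k → 0 ≤ A j k)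
    (hdiag : ∀ j, A j j = -∑ k ∈ Finset.univ.erase j, A j k)
    (β : ℝ) (hβ : 0 < β) (g : ℝ → ℝ)
    (hg : ∀ u v : ℝ, u ≠ v → β ≤ (g u - g v) / (u - v)) :
    ∀ x : Fin N → ℝ,
      x ⬝ᵥ A.mulVec (fun i => g (x i)) ≤ β * (x ⬝ᵥ A.mulVec x) ∧
      x ⬝ᵥ A.mulVec (fun i => g (x i)) ≤ 0 :=
  stmt9_general N A hsym hoff hdiag β hβ g hg
end

section
/- Let N ≥ 2, let A be an irreducible N×N real matrix satisfying Condition A1 with normalized positive left eigenvector ξ, let Ξ = diag(ξ_1,…,ξ_N), and let Γ = diag(γ_1,…,γ_n) be positive definite diagonal. Then for any vectors x_1,…,x_N ∈ ℝ^n, the quantity Σ_{i,j} ξ_i a_{ij} x_i^T Γ x_j ≤ 0, with equality if and only if x_1 = x_2 = ⋯ = x_N. Consequently, in the adaptive scheme ċ(t) = −(α/2) Σ_{i,j} ξ_i a_{ij} x_i(t)^T Γ x_j(t) with α > 0, the derivative ċ(t) is always nonnegative and vanishes exactly on the synchronization manifold. -/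
open Matrix

/-- Let A be an irreducible N×N matrix satisfying Condition A1 with
normalized positive left 0-eigenvector ξ, and Γ = diag(γ₁,…,γₙ) positive definite.
For any x₁,…,x_N ∈ ℝⁿ, the quantity Σᵢⱼ ξᵢ a_{ij} xᵢᵀ Γ xⱼ ≤ 0, with equality iff
x₁ = ⋯ = x_N. Consequently, for the adaptive scheme ċ = −(α/2) Σᵢⱼ ξᵢ a_{ij} xᵢᵀΓxⱼ
with α > 0, the derivative is nonnegative, vanishing exactly on the synchronization
manifold. -/
theorem stmt11 (N n : ℕ) (hN : 2 ≤ N) (A : Matrix (Fin N) (Fin N) ℝ)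
    (hoff : ∀ i j, i ≠ j → 0 ≤ A i j)
    (hdiag : ∀ i, A i i = -∑ j ∈ Finset.univ.erase i, A i j)
    (hirr : ∀ S : Finset (Fin N), S.Nonempty → S ≠ Finset.univ →
      ∃ i ∈ S, ∃ j, j ∉ S ∧ A i j ≠ 0)
    (ξ : Fin N → ℝ) (hξpos : ∀ i, 0 < ξ i) (hξsum : ∑ i, ξ i = 1)
    (hξeig : Matrix.vecMul ξ A = 0)
    (γ : Fin n → ℝ) (hγ : ∀ k, 0 < γ k) :
    ∀ x : Fin N → Fin n → ℝ,
      (∑ i, ∑ j, ξ i * A i j * ∑ k, x i k * γ k * x j k ≤ 0) ∧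
      ((∑ i, ∑ j, ξ i * A i j * ∑ k, x i k * γ k * x j k = 0) ↔ ∀ i j, x i = x j) ∧
      (∀ α : ℝ, 0 < α →
        (0 ≤ -(α / 2) * ∑ i, ∑ j, ξ i * A i j * ∑ k, x i k * γ k * x j k) ∧
        ((-(α / 2) * ∑ i, ∑ j, ξ i * A i j * ∑ k, x i k * γ k * x j k = 0)
          ↔ ∀ i j, x i = x j)) := by
  intro x
  set B : Fin N → Fin N → ℝ := fun i j => ∑ k, x i k * γ k * x j k with hB
  set D : Fin N → Fin N → ℝ := fun i j => ∑ k, γ k * (x i k - x j k)^2 with hD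
  set Q : ℝ := ∑ i, ∑ j, ξ i * A i j * B i j with hQdef
  -- row sums zero
  have hrow : ∀ i, ∑ j, A i j = 0 := by
    intro i
    rw [← Finset.add_sum_erase Finset.univ (fun j => A i j) (Finset.mem_univ i), hdiag i]
    ring
  -- column sums (weighted) zero
  have hcol : ∀ j, ∑ i, ξ i * A i j = 0 := by
    intro j
    have := congrFun hξeig j
    simpa [Matrix.vecMul, dotProduct] using this
  -- D in terms of B
  have hDB : ∀ i j, D i j = B i i - 2 * B i j + B j j := by
    intro i j
    simp only [hD, hB, Finset.mul_sum, ← Finset.sum_sub_distrib, ← Finset.sum_add_distrib]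
    exact Finset.sum_congr rfl fun k _ => by ring
  have hDnn : ∀ i j, 0 ≤ D i j := fun i j =>
    Finset.sum_nonneg fun k _ => mul_nonneg (hγ k).le (sq_nonneg _)
  have hDzero : ∀ i j, D i j = 0 → x i = x j := by
    intro i j h
    funext k
    have hterm := (Finset.sum_eq_zero_iff_of_nonneg
      (fun k _ => mul_nonneg (hγ k).le (sq_nonneg (x i k - x j k)))).mp h k (Finset.mem_univ k)
    have h2 : (x i k - x j k)^2 = 0 := by
      rcases mul_eq_zero.mp hterm with h | h
      · exact absurd h (hγ k).ne'
      · exact h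
    have := pow_eq_zero_iff (n := 2) (by norm_num) |>.mp h2
    linarith
  -- key identity: S = -2 Q
  set S : ℝ := ∑ i, ∑ j, ξ i * A i j * D i j with hSdef
  have hkey : S = -2 * Q := by
    have h1 : S = (∑ i, ∑ j, ξ i * A i j * B i i)
        + (∑ i, ∑ j, ξ i * A i j * B j j)
        - 2 * (∑ i, ∑ j, ξ i * A i j * B i j) := by
      rw [hSdef, Finset.mul_sum, ← Finset.sum_add_distrib, ← Finset.sum_sub_distrib]
      refine Finset.sum_congr rfl fun i _ => ?_
      rw [Finset.mul_sum, ← Finset.sum_add_distrib, ← Finset.sum_sub_distrib]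
      refine Finset.sum_congr rfl fun j _ => ?_
      rw [hDB i j]; ring
    have h2 : (∑ i, ∑ j, ξ i * A i j * B i i) = 0 := by
      refine Finset.sum_eq_zero fun i _ => ?_
      calc ∑ j, ξ i * A i j * B i i = (ξ i * B i i) * ∑ j, A i j := by
            rw [Finset.mul_sum]; exact Finset.sum_congr rfl fun j _ => by ring
        _ = 0 := by rw [hrow i]; ring
    have h3 : (∑ i, ∑ j, ξ i * A i j * B j j) = 0 := by
      rw [Finset.sum_comm]
      refine Finset.sum_eq_zero fun j _ => ?_
      calc ∑ i, ξ i * A i j * B j j = (∑ i, ξ i * A i j) * B j j := by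
            rw [Finset.sum_mul]
        _ = 0 := by rw [hcol j]; ring
    rw [h1, h2, h3, ← hQdef]; ring
  -- nonnegativity of S terms
  have hterm_nn : ∀ i ∈ Finset.univ, ∀ j ∈ Finset.univ, (0:ℝ) ≤ ξ i * A i j * D i j := by
    intro i _ j _
    by_cases hij : i = j
    · subst hij
      have : D i i = 0 := by
        simp [hD]
      simp [this]
    · exact mul_nonneg (mul_nonneg (hξpos i).le (hoff i j hij)) (hDnn i j)
  have hSnn : 0 ≤ S := by
    refine Finset.sum_nonneg fun i hi => Finset.sum_nonneg fun j hj => hterm_nn i hi j hj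
  have hQle : Q ≤ 0 := by linarith [hkey, hSnn]
  -- equality characterization
  have hiff : Q = 0 ↔ ∀ i j, x i = x j := by
    constructor
    · intro hQ0
      have hS0 : S = 0 := by linarith [hkey]
      have hall : ∀ i ∈ Finset.univ, (∑ j, ξ i * A i j * D i j) = 0 :=
        (Finset.sum_eq_zero_iff_of_nonneg (fun i hi =>
          Finset.sum_nonneg fun j hj => hterm_nn i hi j hj)).mp hS0
      have hall2 : ∀ i j, ξ i * A i j * D i j = 0 := by
        intro i j
        exact (Finset.sum_eq_zero_iff_of_nonneg
          (fun j hj => hterm_nn i (Finset.mem_univ i) j hj)).mp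
          (hall i (Finset.mem_univ i)) j (Finset.mem_univ j)
      have hedge : ∀ i j, A i j ≠ 0 → x i = x j := by
        intro i j hA
        by_cases hij : i = j
        · subst hij; rfl
        · have := hall2 i j
          have hD0 : D i j = 0 := by
            rcases mul_eq_zero.mp this with h | h
            · rcases mul_eq_zero.mp h with h' | h'
              · exact absurd h' (hξpos i).ne'
              · exact absurd h' hA
            · exact h
          exact hDzero i j hD0
      -- irreducibility argument
      have h0 : (0:ℕ) < N := by omega
      set i0 : Fin N := ⟨0, h0⟩
      set T : Finset (Fin N) := Finset.univ.filter (fun j => x j = x i0) with hT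
      have hi0T : i0 ∈ T := by simp [hT]
      have hTuniv : T = Finset.univ := by
        by_contra hne
        obtain ⟨i, hiT, j, hjT, hAij⟩ := hirr T ⟨i0, hi0T⟩ hne
        have hxi : x i = x i0 := by
          simpa [hT] using hiT
        have hxj : x j = x i0 := (hedge i j hAij).symm.trans hxi
        exact hjT (by simp [hT, hxj])
      intro i j
      have hi : x i = x i0 := by
        have : i ∈ T := hTuniv ▸ Finset.mem_univ i
        simpa [hT] using this
      have hj : x j = x i0 := by
        have : j ∈ T := hTuniv ▸ Finset.mem_univ j
        simpa [hT] using this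
      rw [hi, hj]
    · intro hx
      have hD0 : ∀ i j, D i j = 0 := by
        intro i j
        have := hx i j
        simp [hD, this]
      have hS0 : S = 0 := by
        rw [hSdef]
        refine Finset.sum_eq_zero fun i _ => Finset.sum_eq_zero fun j _ => ?_
        rw [hD0 i j]; ring
      linarith [hkey]
  refine ⟨hQle, hiff, fun α hα => ⟨?_, ?_⟩⟩
  · have : 0 < α / 2 := by linarith
    nlinarith
  · constructor
    · intro h
      have hα2 : -(α / 2) ≠ 0 := by intro h; nlinarith
      exact hiff.mp (by
        rcases mul_eq_zero.mp h with h' | h'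
        · exact absurd h' hα2
        · exact h')
    · intro hx
      rw [hiff.mpr hx]; ring
end

section
/- (Theorem 1) Let N ≥ 2, let A be an irreducible N×N matrix satisfying Condition A1 with normalized positive left eigenvector ξ and Ξ = diag(ξ), let Γ = diag(γ_1,…,γ_n) be positive definite, and suppose the continuous map f : ℝ^n × ℝ⁺ → ℝ^n belongs to QUAD(Δ,ϖ) for some diagonal Δ and ϖ > 0. Let α > 0 and let x_1,…,x_N : [0,∞) → ℝ^n and c : [0,∞) → ℝ be differentiable functions satisfying, for all t ≥ 0, ẋ_i(t) = f(x_i(t),t) + c(t) Σ_{j≠i} a_{ij} Γ (x_j(t) − x_i(t)) for each i, ċ(t) = −(α/2) Σ_{i,j} ξ_i a_{ij} x_i(t)^T Γ x_j(t), and c(0) = 0. Then the coupled systems synchronize: ‖x_i(t) − x_j(t)‖ → 0 as t → ∞ for all i, j, and c(t) converges to a finite limit c₀ ≥ 0. -/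
/-!
Write `W = ∑ᵢⱼ ξᵢ ξⱼ ‖xᵢ - xⱼ‖²` for the weighted dispersion of the network and
`R = ∑ᵢⱼ ξᵢ aᵢⱼ (xᵢ - xⱼ)ᵀ Γ (xᵢ - xⱼ)` for its coupling energy. Because `ξᵀA = 0` and the rows of
`A` sum to zero, the adaptation law reads `ċ = (α/4) R ≥ 0`, and the QUAD condition gives
`Ẇ ≤ 2((D - ϖ) W - c R)` with `D = ∑ₖ |δₖ|`. Irreducibility of `A` yields a spectral gap
`μ W ≤ R` with `μ > 0`, so `V = (α/4) W + (c - |D|/μ)²` satisfies `V̇ ≤ -(α/2) ϖ W`. Hence `c` is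
nondecreasing and bounded, `V` and then `W` converge, and the limit of `W` is `0` since otherwise
`V` would decrease linearly.
-/

open Matrix Filter Set Topology

section Calculus

variable {g g' : ℝ → ℝ} {a : ℝ}

lemma monotoneOn_Ici_of_hasDerivAt (hd : ∀ t, a ≤ t → HasDerivAt g (g' t) t)
    (hg' : ∀ t, a ≤ t → 0 ≤ g' t) : MonotoneOn g (Ici a) :=
  monotoneOn_of_hasDerivWithinAt_nonneg (convex_Ici a)
    (fun t ht => (hd t ht).continuousAt.continuousWithinAt)
    (fun t ht => (hd t (interior_subset ht)).hasDerivWithinAt)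
    (fun t ht => hg' t (interior_subset ht))

lemma antitoneOn_Ici_of_hasDerivAt (hd : ∀ t, a ≤ t → HasDerivAt g (g' t) t)
    (hg' : ∀ t, a ≤ t → g' t ≤ 0) : AntitoneOn g (Ici a) :=
  antitoneOn_of_hasDerivWithinAt_nonpos (convex_Ici a)
    (fun t ht => (hd t ht).continuousAt.continuousWithinAt)
    (fun t ht => (hd t (interior_subset ht)).hasDerivWithinAt)
    (fun t ht => hg' t (interior_subset ht))

lemma MonotoneOn.exists_tendsto_atTop_of_le {M : ℝ} (hg : MonotoneOn g (Ici a))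
    (hM : ∀ t, a ≤ t → g t ≤ M) : ∃ L, g a ≤ L ∧ Tendsto g atTop (𝓝 L) := by
  have hmono : Monotone fun t => g (max t a) := fun s t hst =>
    hg (le_max_right s a) (le_max_right t a) (max_le_max_right a hst)
  have hbdd : BddAbove (range fun t => g (max t a)) :=
    ⟨M, by rintro _ ⟨t, rfl⟩; exact hM _ (le_max_right t a)⟩
  refine ⟨⨆ t, g (max t a), by simpa using le_ciSup hbdd a, ?_⟩
  refine (tendsto_atTop_ciSup hmono hbdd).congr' ?_
  filter_upwards [eventually_ge_atTop a] with t ht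
  rw [max_eq_left ht]

lemma AntitoneOn.exists_tendsto_atTop_of_le {M : ℝ} (hg : AntitoneOn g (Ici a))
    (hM : ∀ t, a ≤ t → M ≤ g t) : ∃ L, Tendsto g atTop (𝓝 L) := by
  obtain ⟨L, -, hL⟩ := MonotoneOn.exists_tendsto_atTop_of_le (g := fun t => -g t)
    (fun s hs t ht hst => neg_le_neg (hg hs ht hst)) (fun t ht => neg_le_neg (hM t ht))
  exact ⟨-L, by simpa using hL.neg⟩

/-- Otherwise `g` would eventually decrease at a linear rate. -/
lemma nonpos_of_tendsto_of_hasDerivAt_le_neg {h : ℝ → ℝ} {w M : ℝ}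
    (hd : ∀ t, a ≤ t → HasDerivAt g (g' t) t) (hg' : ∀ t, a ≤ t → g' t ≤ -h t)
    (hM : ∀ t, a ≤ t → M ≤ g t) (hh : Tendsto h atTop (𝓝 w)) : w ≤ 0 := by
  by_contra! hw
  obtain ⟨T, hT⟩ := eventually_atTop.mp
    ((hh.eventually (lt_mem_nhds (half_lt_self hw))).and (eventually_ge_atTop a))
  have hanti : AntitoneOn (fun t => g t + w / 2 * t) (Ici T) := by
    refine antitoneOn_Ici_of_hasDerivAt
      (fun t ht => (hd t (hT t ht).2).add ((hasDerivAt_id t).const_mul (w / 2))) fun t ht => ?_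
    linarith [hg' t (hT t ht).2, (hT t ht).1]
  set t := T + 2 * (g T - M + 1) / w
  have hTt : T ≤ t := le_add_of_nonneg_right
    (div_nonneg (by linarith [hM T (hT T le_rfl).2]) hw.le)
  have hgt := hanti self_mem_Ici hTt hTt
  have hwt : w / 2 * (t - T) = g T - M + 1 := by simp only [t]; field_simp; ring
  have := hM t ((hT T le_rfl).2.trans hTt)
  linarith

end Calculus

namespace AdaptiveSync

/-- With `m := |D| / μ`, the function `a W + (c - m)²` is a Lyapunov function whose
derivative is at most `-2 a ϖ W`. -/
theorem tendsto_of_adaptive_gain {W W' R c : ℝ → ℝ} {a μ D ϖ : ℝ} (ha : 0 < a) (hμ : 0 < μ)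
    (hϖ : 0 < ϖ) (hW0 : ∀ t, 0 ≤ W t) (hgap : ∀ t, 0 ≤ t → μ * W t ≤ R t)
    (hW : ∀ t, 0 ≤ t → HasDerivAt W (W' t) t)
    (hW' : ∀ t, 0 ≤ t → W' t ≤ 2 * ((D - ϖ) * W t - c t * R t))
    (hc : ∀ t, 0 ≤ t → HasDerivAt c (a * R t) t) :
    Tendsto W atTop (𝓝 0) ∧ ∃ c₀, c 0 ≤ c₀ ∧ Tendsto c atTop (𝓝 c₀) := by
  set m := |D| / μ
  set V : ℝ → ℝ := fun t => a * W t + (c t - m) ^ 2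
  have hV : ∀ t, 0 ≤ t → HasDerivAt V (a * W' t + 2 * (c t - m) * (a * R t)) t := fun t ht => by
    simpa using ((hW t ht).const_mul a).fun_add (((hc t ht).sub_const m).fun_pow 2)
  have hV' : ∀ t, 0 ≤ t → a * W' t + 2 * (c t - m) * (a * R t) ≤ -(2 * a * ϖ * W t) := by
    intro t ht
    have hmR : D * W t ≤ m * R t := calc
      D * W t ≤ |D| * W t := mul_le_mul_of_nonneg_right (le_abs_self D) (hW0 t)
      _ = m * (μ * W t) := by simp only [m]; field_simp
      _ ≤ m * R t := mul_le_mul_of_nonneg_left (hgap t ht) (by positivity)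
    nlinarith [mul_le_mul_of_nonneg_left (hW' t ht) ha.le]
  have hVanti : AntitoneOn V (Ici 0) := antitoneOn_Ici_of_hasDerivAt hV fun t ht => by
    linarith [hV' t ht, mul_nonneg (by positivity : 0 ≤ 2 * a * ϖ) (hW0 t)]
  have hV0 : ∀ t, 0 ≤ V t := fun t => by positivity [hW0 t]
  have hcmono : MonotoneOn c (Ici 0) := monotoneOn_Ici_of_hasDerivAt hc fun t ht =>
    mul_nonneg ha.le ((mul_nonneg hμ.le (hW0 t)).trans (hgap t ht))
  obtain ⟨c₀, hc₀, hc⟩ := hcmono.exists_tendsto_atTop_of_le (M := m + 1 + V 0) fun t ht => by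
    have hcV : (c t - m) ^ 2 ≤ V 0 :=
      (le_add_of_nonneg_left (mul_nonneg ha.le (hW0 t))).trans (hVanti self_mem_Ici ht ht)
    nlinarith [sq_nonneg (c t - m - 1)]
  obtain ⟨v, hv⟩ := hVanti.exists_tendsto_atTop_of_le fun t _ => hV0 t
  have hWlim : Tendsto W atTop (𝓝 ((v - (c₀ - m) ^ 2) / a)) :=
    ((hv.sub ((hc.sub_const m).pow 2)).div_const a).congr fun t => by
      simp only [V]; field_simp; ring
  have hlim_nonpos := nonpos_of_tendsto_of_hasDerivAt_le_neg hV hV' (fun t _ => hV0 t)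
    (hWlim.const_mul (2 * a * ϖ))
  have hlim_nonneg := ge_of_tendsto' hWlim hW0
  have hlim : (v - (c₀ - m) ^ 2) / a = 0 := le_antisymm
    (nonpos_of_mul_nonpos_right hlim_nonpos (by positivity)) hlim_nonneg
  exact ⟨hlim ▸ hWlim, c₀, hc₀, hc⟩

variable {ι κ : Type*} {ξ : ι → ℝ} {A : Matrix ι ι ℝ} {γ : κ → ℝ}

section

variable [Fintype κ]

lemma norm_sq_le_dotProduct_self (a : κ → ℝ) : ‖a‖ ^ 2 ≤ a ⬝ᵥ a := by
  have h : ‖a‖ ≤ √(a ⬝ᵥ a) := (pi_norm_le_iff_of_nonneg (Real.sqrt_nonneg _)).mpr fun k =>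
    Real.abs_le_sqrt <| by
      simpa [sq, dotProduct] using Finset.single_le_sum (f := fun k => a k * a k)
        (fun k _ => mul_self_nonneg (a k)) (Finset.mem_univ k)
  exact (Real.le_sqrt (norm_nonneg _) (dotProduct_self_star_nonneg a)).mp h

lemma mul_dotProduct_self_nonneg (hγ : ∀ k, 0 ≤ γ k) (a : κ → ℝ) : 0 ≤ (a * γ) ⬝ᵥ a :=
  Finset.sum_nonneg fun k _ => by
    simpa only [Pi.mul_apply, mul_right_comm] using mul_nonneg (mul_self_nonneg (a k)) (hγ k)

lemma eq_zero_of_mul_dotProduct_self_eq_zero (hγ : ∀ k, 0 < γ k) {a : κ → ℝ}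
    (h : (a * γ) ⬝ᵥ a = 0) : a = 0 := by
  ext k
  have hk : a k * a k * γ k = 0 := by
    simpa only [Pi.mul_apply, mul_right_comm] using (Finset.sum_eq_zero_iff_of_nonneg fun k _ => by
      simpa only [Pi.mul_apply, mul_right_comm] using
        mul_nonneg (mul_self_nonneg (a k)) (hγ k).le).mp h k (Finset.mem_univ k)
  exact mul_self_eq_zero.mp ((mul_eq_zero.mp hk).resolve_right (hγ k).ne')

lemma couplingEnergy_term_nonneg (hoff : ∀ i j, i ≠ j → 0 ≤ A i j) (hξ : ∀ i, 0 ≤ ξ i)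
    (hγ : ∀ k, 0 ≤ γ k) (u : ι → κ → ℝ) (i j : ι) :
    0 ≤ ξ i * A i j * (((u i - u j) * γ) ⬝ᵥ (u i - u j)) := by
  rcases eq_or_ne i j with rfl | hij
  · simp
  · exact mul_nonneg (mul_nonneg (hξ i) (hoff i j hij)) (mul_dotProduct_self_nonneg hγ _)

end

variable [Fintype ι]

def diffusiveCoupling [DecidableEq ι] (A : Matrix ι ι ℝ) (γ : κ → ℝ) (u : ι → κ → ℝ) (i : ι) :
    κ → ℝ :=
  fun k => ∑ j ∈ Finset.univ.erase i, A i j * (γ k * (u j k - u i k))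

lemma sum_sum_mul_left_eq_zero (hrow : ∀ i, ∑ j, A i j = 0) (s : ι → ℝ) :
    ∑ i, ∑ j, ξ i * A i j * s i = 0 :=
  Finset.sum_eq_zero fun i _ => by
    rw [← Finset.sum_mul, ← Finset.mul_sum, hrow, mul_zero, zero_mul]

lemma sum_sum_mul_right_eq_zero (hcol : ∀ j, ∑ i, ξ i * A i j = 0) (s : ι → ℝ) :
    ∑ i, ∑ j, ξ i * A i j * s j = 0 := by
  rw [Finset.sum_comm]
  exact Finset.sum_eq_zero fun j _ => by rw [← Finset.sum_mul, hcol, zero_mul]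

lemma diffusiveCoupling_eq [DecidableEq ι] (hrow : ∀ i, ∑ j, A i j = 0) (u : ι → κ → ℝ) (i : ι) :
    diffusiveCoupling A γ u i = ∑ j, A i j • (γ * u j) := by
  ext k
  have hsum : ∑ j ∈ Finset.univ.erase i, A i j * (γ k * (u j k - u i k))
      = ∑ j, A i j * (γ k * (u j k - u i k)) :=
    Finset.sum_erase _ (by simp)
  simp only [diffusiveCoupling, hsum, Finset.sum_apply, Pi.smul_apply, Pi.mul_apply, smul_eq_mul]
  have : ∑ j, A i j * (γ k * u i k) = 0 := by rw [← Finset.sum_mul, hrow, zero_mul]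
  simp only [mul_sub, Finset.sum_sub_distrib, this, sub_zero]

variable [Fintype κ]

def pairing (ξ : ι → ℝ) (u w : ι → κ → ℝ) : ℝ :=
  ∑ i, ∑ j, ξ i * ξ j * ((u i - u j) ⬝ᵥ (w i - w j))

def dispersion (ξ : ι → ℝ) (u : ι → κ → ℝ) : ℝ := pairing ξ u u

def couplingEnergy (ξ : ι → ℝ) (A : Matrix ι ι ℝ) (γ : κ → ℝ) (u : ι → κ → ℝ) : ℝ :=
  ∑ i, ∑ j, ξ i * A i j * (((u i - u j) * γ) ⬝ᵥ (u i - u j))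

lemma pairing_add_smul (u w w' : ι → κ → ℝ) (r : ℝ) :
    pairing ξ u (fun i => w i + r • w' i) = pairing ξ u w + r * pairing ξ u w' := by
  simp only [pairing, Finset.mul_sum, ← Finset.sum_add_distrib]
  refine Finset.sum_congr rfl fun i _ => Finset.sum_congr rfl fun j _ => ?_
  rw [add_sub_add_comm, ← smul_sub, dotProduct_add, dotProduct_smul, smul_eq_mul]
  ring

lemma pairing_eq (hξ : ∑ i, ξ i = 1) (u w : ι → κ → ℝ) :
    pairing ξ u w = 2 * ∑ i, ξ i * (u i ⬝ᵥ w i)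
      - 2 * ((∑ i, ξ i • u i) ⬝ᵥ ∑ j, ξ j • w j) := by
  have hcross : (∑ i, ξ i • u i) ⬝ᵥ ∑ j, ξ j • w j = ∑ i, ∑ j, ξ i * ξ j * (u i ⬝ᵥ w j) := by
    rw [sum_dotProduct]
    refine Finset.sum_congr rfl fun i _ => ?_
    simp only [dotProduct_sum, smul_dotProduct, dotProduct_smul, smul_eq_mul]
    exact Finset.sum_congr rfl fun j _ => by ring
  have hdiag : ∑ i, ∑ j, ξ i * ξ j * (u i ⬝ᵥ w i) = ∑ i, ξ i * (u i ⬝ᵥ w i) :=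
    Finset.sum_congr rfl fun i _ => by rw [← Finset.sum_mul, ← Finset.mul_sum, hξ, mul_one]
  have hdiag' : ∑ i, ∑ j, ξ i * ξ j * (u j ⬝ᵥ w j) = ∑ j, ξ j * (u j ⬝ᵥ w j) := by
    rw [Finset.sum_comm]
    exact Finset.sum_congr rfl fun j _ => by rw [← Finset.sum_mul, ← Finset.sum_mul, hξ, one_mul]
  have hcross' : ∑ i, ∑ j, ξ i * ξ j * (u j ⬝ᵥ w i) = ∑ i, ∑ j, ξ i * ξ j * (u i ⬝ᵥ w j) := by
    rw [Finset.sum_comm]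
    exact Finset.sum_congr rfl fun i _ => Finset.sum_congr rfl fun j _ => by ring
  have hexpand : pairing ξ u w = ∑ i, ∑ j, ξ i * ξ j * (u i ⬝ᵥ w i)
      + ∑ i, ∑ j, ξ i * ξ j * (u j ⬝ᵥ w j) - ∑ i, ∑ j, ξ i * ξ j * (u i ⬝ᵥ w j)
      - ∑ i, ∑ j, ξ i * ξ j * (u j ⬝ᵥ w i) := by
    simp only [pairing, ← Finset.sum_add_distrib, ← Finset.sum_sub_distrib]
    refine Finset.sum_congr rfl fun i _ => Finset.sum_congr rfl fun j _ => ?_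
    simp only [sub_dotProduct, dotProduct_sub]
    ring
  rw [hexpand, hdiag, hdiag', hcross', hcross]
  ring

lemma couplingEnergy_eq (hrow : ∀ i, ∑ j, A i j = 0) (hcol : ∀ j, ∑ i, ξ i * A i j = 0)
    (u : ι → κ → ℝ) :
    couplingEnergy ξ A γ u = -2 * ∑ i, ∑ j, ξ i * A i j * ((u i * γ) ⬝ᵥ u j) := by
  have hsymm : ∀ i j, (u j * γ) ⬝ᵥ u i = (u i * γ) ⬝ᵥ u j := fun i j => by
    simp only [dotProduct, Pi.mul_apply]
    exact Finset.sum_congr rfl fun k _ => by ring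
  have hexpand : couplingEnergy ξ A γ u = ∑ i, ∑ j, ξ i * A i j * ((u i * γ) ⬝ᵥ u i)
      + ∑ i, ∑ j, ξ i * A i j * ((u j * γ) ⬝ᵥ u j)
      - 2 * ∑ i, ∑ j, ξ i * A i j * ((u i * γ) ⬝ᵥ u j) := by
    simp only [couplingEnergy, Finset.mul_sum, ← Finset.sum_add_distrib, ← Finset.sum_sub_distrib]
    refine Finset.sum_congr rfl fun i _ => Finset.sum_congr rfl fun j _ => ?_
    simp only [sub_mul, sub_dotProduct, dotProduct_sub, hsymm i j]
    ring
  rw [hexpand, sum_sum_mul_left_eq_zero hrow, sum_sum_mul_right_eq_zero hcol]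
  ring

lemma pairing_diffusiveCoupling [DecidableEq ι] (hξ : ∑ i, ξ i = 1) (hrow : ∀ i, ∑ j, A i j = 0)
    (hcol : ∀ j, ∑ i, ξ i * A i j = 0) (u : ι → κ → ℝ) :
    pairing ξ u (diffusiveCoupling A γ u) = -couplingEnergy ξ A γ u := by
  have hmean : ∑ i, ξ i • diffusiveCoupling A γ u i = 0 := by
    simp only [diffusiveCoupling_eq hrow, Finset.smul_sum, smul_smul]
    rw [Finset.sum_comm]
    simp only [← Finset.sum_smul, hcol, zero_smul, Finset.sum_const_zero]
  have hdiag : ∀ i, ξ i * (u i ⬝ᵥ diffusiveCoupling A γ u i)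
      = ∑ j, ξ i * A i j * ((u i * γ) ⬝ᵥ u j) := fun i => by
    simp only [diffusiveCoupling_eq hrow, dotProduct_sum, dotProduct_smul, smul_eq_mul,
      Finset.mul_sum]
    refine Finset.sum_congr rfl fun j _ => ?_
    simp only [dotProduct, Pi.mul_apply, Finset.mul_sum]
    exact Finset.sum_congr rfl fun k _ => by ring
  rw [pairing_eq hξ, hmean, dotProduct_zero, Finset.sum_congr rfl fun i _ => hdiag i,
    couplingEnergy_eq hrow hcol]
  ring

lemma dispersion_nonneg (hξ : ∀ i, 0 ≤ ξ i) (u : ι → κ → ℝ) : 0 ≤ dispersion ξ u :=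
  Finset.sum_nonneg fun i _ => Finset.sum_nonneg fun j _ =>
    mul_nonneg (mul_nonneg (hξ i) (hξ j)) (dotProduct_self_star_nonneg _)

lemma couplingEnergy_nonneg (hoff : ∀ i j, i ≠ j → 0 ≤ A i j) (hξ : ∀ i, 0 ≤ ξ i)
    (hγ : ∀ k, 0 ≤ γ k) (u : ι → κ → ℝ) : 0 ≤ couplingEnergy ξ A γ u :=
  Finset.sum_nonneg fun i _ => Finset.sum_nonneg fun j _ =>
    couplingEnergy_term_nonneg hoff hξ hγ u i j

lemma hasDerivAt_dispersion {x : ι → ℝ → κ → ℝ} {v : ι → κ → ℝ} {t : ℝ}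
    (hx : ∀ i, HasDerivAt (x i) (v i) t) :
    HasDerivAt (fun s => dispersion ξ fun i => x i s) (2 * pairing ξ (fun i => x i t) v) t := by
  have hcoord : ∀ i j k, HasDerivAt (fun s => (x i s k - x j s k) * (x i s k - x j s k))
      (2 * ((x i t k - x j t k) * (v i k - v j k))) t := fun i j k => by
    have hd := (hasDerivAt_pi.mp (hx i) k).fun_sub (hasDerivAt_pi.mp (hx j) k)
    exact (hd.fun_mul hd).congr_deriv (by ring)
  have hsum : HasDerivAt
      (fun s => ∑ i, ∑ j, ξ i * ξ j * ∑ k, (x i s k - x j s k) * (x i s k - x j s k))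
      (∑ i, ∑ j, ξ i * ξ j * ∑ k, 2 * ((x i t k - x j t k) * (v i k - v j k))) t :=
    HasDerivAt.fun_sum fun i _ => HasDerivAt.fun_sum fun j _ =>
      (HasDerivAt.fun_sum fun k _ => hcoord i j k).const_mul (ξ i * ξ j)
  simp only [dispersion, pairing, dotProduct, Pi.sub_apply]
  convert hsum using 1
  simp only [Finset.mul_sum]
  exact Finset.sum_congr rfl fun i _ => Finset.sum_congr rfl fun j _ =>
    Finset.sum_congr rfl fun k _ => by ring

lemma pairing_le_mul_dispersion {F : (κ → ℝ) → κ → ℝ} {L : ℝ} (hξ : ∀ i, 0 ≤ ξ i)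
    (hF : ∀ a b, (a - b) ⬝ᵥ (F a - F b) ≤ L * ((a - b) ⬝ᵥ (a - b))) (u : ι → κ → ℝ) :
    pairing ξ u (fun i => F (u i)) ≤ L * dispersion ξ u := by
  simp only [dispersion, pairing, Finset.mul_sum]
  refine Finset.sum_le_sum fun i _ => Finset.sum_le_sum fun j _ => ?_
  calc ξ i * ξ j * ((u i - u j) ⬝ᵥ (F (u i) - F (u j)))
      ≤ ξ i * ξ j * (L * ((u i - u j) ⬝ᵥ (u i - u j))) :=
        mul_le_mul_of_nonneg_left (hF _ _) (mul_nonneg (hξ i) (hξ j))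
    _ = L * (ξ i * ξ j * ((u i - u j) ⬝ᵥ (u i - u j))) := by ring

lemma mul_norm_sub_sq_le_dispersion (hξ : ∀ i, 0 ≤ ξ i) (u : ι → κ → ℝ) (i j : ι) :
    ξ i * ξ j * ‖u i - u j‖ ^ 2 ≤ dispersion ξ u := by
  have hterm : ∀ i j, 0 ≤ ξ i * ξ j * ((u i - u j) ⬝ᵥ (u i - u j)) := fun i j =>
    mul_nonneg (mul_nonneg (hξ i) (hξ j)) (dotProduct_self_star_nonneg _)
  calc ξ i * ξ j * ‖u i - u j‖ ^ 2 ≤ ξ i * ξ j * ((u i - u j) ⬝ᵥ (u i - u j)) :=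
        mul_le_mul_of_nonneg_left (norm_sq_le_dotProduct_self _) (mul_nonneg (hξ i) (hξ j))
    _ ≤ ∑ j', ξ i * ξ j' * ((u i - u j') ⬝ᵥ (u i - u j')) :=
        Finset.single_le_sum (fun j' _ => hterm i j') (Finset.mem_univ j)
    _ ≤ dispersion ξ u :=
        Finset.single_le_sum (f := fun i' => ∑ j', ξ i' * ξ j' * ((u i' - u j') ⬝ᵥ (u i' - u j')))
          (fun i' _ => Finset.sum_nonneg fun j' _ => hterm i' j') (Finset.mem_univ i)

lemma tendsto_norm_sub_of_dispersion {x : ι → ℝ → κ → ℝ} (hξ : ∀ i, 0 < ξ i)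
    (hW : Tendsto (fun t => dispersion ξ fun i => x i t) atTop (𝓝 0)) (i j : ι) :
    Tendsto (fun t => ‖x i t - x j t‖) atTop (𝓝 0) := by
  have hbound : ∀ t, ‖x i t - x j t‖ ≤ √(dispersion ξ (fun i => x i t) / (ξ i * ξ j)) := fun t =>
    Real.le_sqrt_of_sq_le <| (le_div_iff₀' (mul_pos (hξ i) (hξ j))).mpr <|
      mul_norm_sub_sq_le_dispersion (fun i => (hξ i).le) (fun i => x i t) i j
  have hlim : Tendsto (fun t => √(dispersion ξ (fun i => x i t) / (ξ i * ξ j))) atTop (𝓝 0) := by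
    simpa using (hW.div_const (ξ i * ξ j)).sqrt
  exact squeeze_zero (fun t => norm_nonneg _) hbound hlim

def IsIrreducible (A : Matrix ι ι ℝ) : Prop :=
  ∀ S : Finset ι, S.Nonempty → S ≠ Finset.univ → ∃ i ∈ S, ∃ j, j ∉ S ∧ A i j ≠ 0

lemma eq_of_irreducible {β : Type*}
    (hirr : IsIrreducible A)
    {u : ι → β} (h : ∀ i j, A i j ≠ 0 → u i = u j) (i j : ι) : u i = u j := by
  classical
  set S := Finset.univ.filter fun l => u l = u i
  have hS : S = Finset.univ := by
    by_contra hS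
    obtain ⟨p, hp, q, hq, hpq⟩ := hirr S ⟨i, by simp [S]⟩ hS
    exact hq (by simpa [S, ← h p q hpq] using hp)
  have hj : j ∈ S := hS ▸ Finset.mem_univ j
  exact (Finset.mem_filter.mp hj).2.symm

lemma eq_of_couplingEnergy_eq_zero (hoff : ∀ i j, i ≠ j → 0 ≤ A i j)
    (hirr : IsIrreducible A)
    (hξ : ∀ i, 0 < ξ i) (hγ : ∀ k, 0 < γ k) {u : ι → κ → ℝ}
    (hu : couplingEnergy ξ A γ u = 0) (i j : ι) : u i = u j := by
  have hnn := couplingEnergy_term_nonneg hoff (fun i => (hξ i).le) (fun k => (hγ k).le) u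
  have hterm : ∀ i j, ξ i * A i j * (((u i - u j) * γ) ⬝ᵥ (u i - u j)) = 0 := fun i j =>
    (Finset.sum_eq_zero_iff_of_nonneg fun j _ => hnn i j).mp
      ((Finset.sum_eq_zero_iff_of_nonneg fun i _ =>
        Finset.sum_nonneg fun j _ => hnn i j).mp hu i (Finset.mem_univ i)) j (Finset.mem_univ j)
  refine eq_of_irreducible hirr (fun i j hA => ?_) i j
  have := (mul_eq_zero.mp (hterm i j)).resolve_left (mul_ne_zero (hξ i).ne' hA)
  exact sub_eq_zero.mp (eq_zero_of_mul_dotProduct_self_eq_zero hγ this)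

lemma dispersion_smul_sub (r : ℝ) (b : κ → ℝ) (u : ι → κ → ℝ) :
    dispersion ξ (fun i => r • (u i - b)) = r ^ 2 * dispersion ξ u := by
  simp only [dispersion, pairing, Finset.mul_sum, ← smul_sub, sub_sub_sub_cancel_right,
    smul_dotProduct, dotProduct_smul, smul_eq_mul]
  exact Finset.sum_congr rfl fun i _ => Finset.sum_congr rfl fun j _ => by ring

lemma couplingEnergy_smul_sub (r : ℝ) (b : κ → ℝ) (u : ι → κ → ℝ) :
    couplingEnergy ξ A γ (fun i => r • (u i - b)) = r ^ 2 * couplingEnergy ξ A γ u := by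
  simp only [couplingEnergy, Finset.mul_sum, ← smul_sub, sub_sub_sub_cancel_right,
    smul_mul_assoc, smul_dotProduct, dotProduct_smul, smul_eq_mul]
  exact Finset.sum_congr rfl fun i _ => Finset.sum_congr rfl fun j _ => by ring

lemma continuous_dispersion : Continuous fun u : ι → κ → ℝ => dispersion ξ u := by
  unfold dispersion pairing dotProduct
  fun_prop

lemma continuous_couplingEnergy : Continuous fun u : ι → κ → ℝ => couplingEnergy ξ A γ u := by
  unfold couplingEnergy dotProduct
  fun_prop

def normalizedStates (ξ : ι → ℝ) : Set (ι → κ → ℝ) :=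
  {u | ∑ i, ξ i • u i = 0 ∧ dispersion ξ u = 1}

lemma isCompact_normalizedStates (hξ : ∀ i, 0 < ξ i) (hsum : ∑ i, ξ i = 1) :
    IsCompact (normalizedStates (κ := κ) ξ) := by
  have hclosed : IsClosed (normalizedStates (κ := κ) ξ) :=
    (isClosed_eq (by fun_prop) continuous_const).inter
      (isClosed_eq continuous_dispersion continuous_const)
  refine Metric.isCompact_of_isClosed_isBounded hclosed <|
    isBounded_iff_forall_norm_le.mpr ⟨∑ i, √(1 / ξ i), fun u hu => ?_⟩
  have hvar : ∑ i, ξ i * (u i ⬝ᵥ u i) = 1 / 2 := by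
    have := hu.2
    rw [dispersion, pairing_eq hsum, hu.1, dotProduct_zero] at this
    linarith
  refine (pi_norm_le_iff_of_nonneg (by positivity)).mpr fun i => ?_
  have hi : ξ i * (u i ⬝ᵥ u i) ≤ 1 := by
    have := Finset.single_le_sum (f := fun i => ξ i * (u i ⬝ᵥ u i))
      (fun i _ => mul_nonneg (hξ i).le (dotProduct_self_star_nonneg _)) (Finset.mem_univ i)
    linarith
  calc ‖u i‖ ≤ √(1 / ξ i) := Real.le_sqrt_of_sq_le <|
        (norm_sq_le_dotProduct_self (u i)).trans <| (le_div_iff₀' (hξ i)).mpr hi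
    _ ≤ ∑ i, √(1 / ξ i) :=
        Finset.single_le_sum (f := fun i => √(1 / ξ i)) (fun i _ => Real.sqrt_nonneg _)
          (Finset.mem_univ i)

lemma normalize_mem_normalizedStates (hsum : ∑ i, ξ i = 1) {u : ι → κ → ℝ}
    (hu : 0 < dispersion ξ u) :
    (fun i => (√(dispersion ξ u))⁻¹ • (u i - ∑ j, ξ j • u j)) ∈ normalizedStates ξ := by
  refine ⟨?_, ?_⟩
  · simp only [smul_comm (ξ _) (√(dispersion ξ u))⁻¹, ← Finset.smul_sum, smul_sub,
      Finset.sum_sub_distrib, ← Finset.sum_smul, hsum, one_smul, sub_self]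
  · rw [dispersion_smul_sub, inv_pow, Real.sq_sqrt hu.le, inv_mul_cancel₀ hu.ne']

/-- Minimize the coupling energy over the compact set `normalizedStates ξ`, to which every
configuration reduces by `dispersion_smul_sub` and `couplingEnergy_smul_sub`. -/
theorem exists_pos_mul_dispersion_le_couplingEnergy (hoff : ∀ i j, i ≠ j → 0 ≤ A i j)
    (hirr : IsIrreducible A)
    (hξ : ∀ i, 0 < ξ i) (hsum : ∑ i, ξ i = 1) (hγ : ∀ k, 0 < γ k) :
    ∃ μ, 0 < μ ∧ ∀ u : ι → κ → ℝ, μ * dispersion ξ u ≤ couplingEnergy ξ A γ u := by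
  have hR : ∀ u : ι → κ → ℝ, 0 ≤ couplingEnergy ξ A γ u :=
    couplingEnergy_nonneg hoff (fun i => (hξ i).le) (fun k => (hγ k).le)
  obtain ⟨μ, hμ, hμK⟩ := (isCompact_normalizedStates hξ hsum).exists_forall_le'
    continuous_couplingEnergy.continuousOn (a := 0) fun u hu => (hR u).lt_of_ne fun h0 => by
      have hcons := eq_of_couplingEnergy_eq_zero hoff hirr hξ hγ h0.symm
      have : dispersion ξ u = 0 := Finset.sum_eq_zero fun i _ => Finset.sum_eq_zero fun j _ => by
        rw [hcons i j, sub_self, zero_dotProduct, mul_zero]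
      exact zero_ne_one (this.symm.trans hu.2)
  refine ⟨μ, hμ, fun u => ?_⟩
  rcases (dispersion_nonneg (fun i => (hξ i).le) u).eq_or_lt with h0 | hpos
  · rw [← h0, mul_zero]
    exact hR u
  · have hle := hμK _ (normalize_mem_normalizedStates hsum hpos)
    rwa [couplingEnergy_smul_sub, inv_pow, Real.sq_sqrt hpos.le, inv_mul_eq_div,
      le_div_iff₀ hpos] at hle

lemma dotProduct_sub_le_of_quad {F : (κ → ℝ) → κ → ℝ} {δ : κ → ℝ} {ϖ : ℝ} {a b : κ → ℝ}
    (h : (∑ k, (a k - b k) * (F a k - F b k)) - (∑ k, δ k * (a k - b k) ^ 2)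
      ≤ -ϖ * ∑ k, (a k - b k) ^ 2) :
    (a - b) ⬝ᵥ (F a - F b) ≤ ((∑ k, |δ k|) - ϖ) * ((a - b) ⬝ᵥ (a - b)) := by
  have hδ : ∑ k, δ k * (a k - b k) ^ 2 ≤ (∑ k, |δ k|) * ∑ k, (a k - b k) ^ 2 := by
    rw [Finset.mul_sum]
    exact Finset.sum_le_sum fun k _ => mul_le_mul_of_nonneg_right ((le_abs_self _).trans
      (Finset.single_le_sum (f := fun k => |δ k|) (fun _ _ => abs_nonneg _) (Finset.mem_univ k)))
      (sq_nonneg _)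
  have hsq : (a - b) ⬝ᵥ (a - b) = ∑ k, (a k - b k) ^ 2 := by simp only [dotProduct, Pi.sub_apply, sq]
  rw [hsq]
  change ∑ k, (a k - b k) * (F a k - F b k) ≤ _
  linarith

end AdaptiveSync

open AdaptiveSync

theorem stmt12_general (N n : ℕ) (A : Matrix (Fin N) (Fin N) ℝ)
    (hoff : ∀ i j, i ≠ j → 0 ≤ A i j)
    (hdiag : ∀ i, A i i = -∑ j ∈ Finset.univ.erase i, A i j)
    (hirr : ∀ S : Finset (Fin N), S.Nonempty → S ≠ Finset.univ →
      ∃ i ∈ S, ∃ j, j ∉ S ∧ A i j ≠ 0)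
    (ξ : Fin N → ℝ) (hξpos : ∀ i, 0 < ξ i) (hξsum : ∑ i, ξ i = 1)
    (hξeig : Matrix.vecMul ξ A = 0)
    (γ : Fin n → ℝ) (hγ : ∀ k, 0 < γ k)
    (δ : Fin n → ℝ) (ϖ : ℝ) (hϖ : 0 < ϖ)
    (f : (Fin n → ℝ) → ℝ → (Fin n → ℝ))
    (hQUAD : ∀ x y : Fin n → ℝ, ∀ t : ℝ, 0 ≤ t →
      (∑ k, (x k - y k) * (f x t k - f y t k)) - (∑ k, δ k * (x k - y k) ^ 2)
        ≤ -ϖ * ∑ k, (x k - y k) ^ 2)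
    (α : ℝ) (hα : 0 < α)
    (x : Fin N → ℝ → (Fin n → ℝ)) (c : ℝ → ℝ) (hc0 : c 0 = 0)
    (hODE : ∀ i, ∀ t : ℝ, 0 ≤ t →
      HasDerivAt (x i)
        (fun k => f (x i t) t k
          + c t * ∑ j ∈ Finset.univ.erase i, A i j * (γ k * (x j t k - x i t k))) t)
    (hcODE : ∀ t : ℝ, 0 ≤ t →
      HasDerivAt c
        (-(α / 2) * ∑ i, ∑ j, ξ i * A i j * ∑ k, x i t k * γ k * x j t k) t) :
    (∀ i j, Tendsto (fun t => ‖x i t - x j t‖) atTop (nhds 0)) ∧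
    ∃ c₀ : ℝ, 0 ≤ c₀ ∧ Tendsto c atTop (nhds c₀) := by
  have hrow : ∀ i, ∑ j, A i j = 0 := fun i => by
    rw [← Finset.add_sum_erase _ _ (Finset.mem_univ i), hdiag i, neg_add_cancel]
  have hcol : ∀ j, ∑ i, ξ i * A i j = 0 := fun j => by
    simpa [vecMul, dotProduct] using congrFun hξeig j
  obtain ⟨μ, hμ, hgap⟩ :=
    exists_pos_mul_dispersion_le_couplingEnergy hoff hirr hξpos hξsum hγ
  have hc : ∀ t, 0 ≤ t → HasDerivAt c (α / 4 * couplingEnergy ξ A γ fun i => x i t) t :=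
    fun t ht => by
      convert hcODE t ht using 1
      rw [couplingEnergy_eq hrow hcol]
      simp only [dotProduct, Pi.mul_apply]
      ring
  have hW' : ∀ t, 0 ≤ t →
      2 * pairing ξ (fun i => x i t)
        (fun i => f (x i t) t + c t • diffusiveCoupling A γ (fun j => x j t) i)
      ≤ 2 * (((∑ k, |δ k|) - ϖ) * dispersion ξ (fun i => x i t)
        - c t * couplingEnergy ξ A γ fun i => x i t) := fun t ht => by
    rw [pairing_add_smul, pairing_diffusiveCoupling hξsum hrow hcol]
    have := pairing_le_mul_dispersion (fun i => (hξpos i).le)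
      (fun a b => dotProduct_sub_le_of_quad (hQUAD a b t ht)) (fun i => x i t)
    linarith
  -- `hODE i t` is `HasDerivAt (x i) (f (x i t) t + c t • diffusiveCoupling A γ (x · t) i) t`
  -- up to unfolding the definitions.
  obtain ⟨hW, c₀, hc₀, hc⟩ := tendsto_of_adaptive_gain (by positivity : 0 < α / 4) hμ hϖ
    (fun t => dispersion_nonneg (fun i => (hξpos i).le) _) (fun t _ => hgap _)
    (fun t ht => hasDerivAt_dispersion fun i => hODE i t ht) hW' hc
  exact ⟨tendsto_norm_sub_of_dispersion hξpos hW, c₀, hc0 ▸ hc₀, hc⟩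

/-- Theorem 1: linearly coupled systems
ẋᵢ = f(xᵢ,t) + c(t) Σ_{j≠i} a_{ij} Γ(xⱼ − xᵢ) with adaptive coupling strength
ċ = −(α/2) Σᵢⱼ ξᵢ a_{ij} xᵢᵀΓxⱼ, c(0) = 0, where A is irreducible and satisfies
Condition A1 with normalized positive left 0-eigenvector ξ, Γ = diag(γ) > 0, and
f ∈ QUAD(Δ,ϖ). Then the system synchronizes: ‖xᵢ(t) − xⱼ(t)‖ → 0 for all i,j,
and c(t) converges to a finite limit c₀ ≥ 0. -/
theorem stmt12 (N n : ℕ) (hN : 2 ≤ N) (A : Matrix (Fin N) (Fin N) ℝ)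
    (hoff : ∀ i j, i ≠ j → 0 ≤ A i j)
    (hdiag : ∀ i, A i i = -∑ j ∈ Finset.univ.erase i, A i j)
    (hirr : ∀ S : Finset (Fin N), S.Nonempty → S ≠ Finset.univ →
      ∃ i ∈ S, ∃ j, j ∉ S ∧ A i j ≠ 0)
    (ξ : Fin N → ℝ) (hξpos : ∀ i, 0 < ξ i) (hξsum : ∑ i, ξ i = 1)
    (hξeig : Matrix.vecMul ξ A = 0)
    (γ : Fin n → ℝ) (hγ : ∀ k, 0 < γ k)
    (δ : Fin n → ℝ) (ϖ : ℝ) (hϖ : 0 < ϖ)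
    (f : (Fin n → ℝ) → ℝ → (Fin n → ℝ))
    (hf : Continuous fun p : (Fin n → ℝ) × ℝ => f p.1 p.2)
    (hQUAD : ∀ x y : Fin n → ℝ, ∀ t : ℝ, 0 ≤ t →
      (∑ k, (x k - y k) * (f x t k - f y t k)) - (∑ k, δ k * (x k - y k) ^ 2)
        ≤ -ϖ * ∑ k, (x k - y k) ^ 2)
    (α : ℝ) (hα : 0 < α)
    (x : Fin N → ℝ → (Fin n → ℝ)) (c : ℝ → ℝ) (hc0 : c 0 = 0)
    (hODE : ∀ i, ∀ t : ℝ, 0 ≤ t →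
      HasDerivAt (x i)
        (fun k => f (x i t) t k
          + c t * ∑ j ∈ Finset.univ.erase i, A i j * (γ k * (x j t k - x i t k))) t)
    (hcODE : ∀ t : ℝ, 0 ≤ t →
      HasDerivAt c
        (-(α / 2) * ∑ i, ∑ j, ξ i * A i j * ∑ k, x i t k * γ k * x j t k) t) :
    (∀ i j, Tendsto (fun t => ‖x i t - x j t‖) atTop (nhds 0)) ∧
    ∃ c₀ : ℝ, 0 ≤ c₀ ∧ Tendsto c atTop (nhds c₀) :=
  stmt12_general N n A hoff hdiag hirr ξ hξpos hξsum hξeig γ hγ δ ϖ hϖ f hQUAD α hα x c hc0 hODE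
    hcODE
end

section
/- (Theorem 2) Let N ≥ 2, let A be an irreducible N×N matrix satisfying Condition A1 (the coupling matrix, possibly unknown), let Ã = (ã_{ij}) be any irreducible N×N matrix satisfying Condition A2, let Γ = diag(γ_1,…,γ_n) be positive definite, and suppose f : ℝ^n × ℝ⁺ → ℝ^n is continuous and belongs to QUAD(Δ,ϖ) for some diagonal Δ and ϖ > 0. Let α > 0 and let x_1,…,x_N : [0,∞) → ℝ^n and c : [0,∞) → ℝ be differentiable functions satisfying, for all t ≥ 0, ẋ_i(t) = f(x_i(t),t) + c(t) Σ_{j≠i} a_{ij} Γ (x_j(t) − x_i(t)), ċ(t) = −(α/2) Σ_{i,j} ã_{ij} x_i(t)^T x_j(t), and c(0) = 0. Then ‖x_i(t) − x_j(t)‖ → 0 as t → ∞ for all i, j, and c(t) converges to a finite limit. -/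
/-!
Let `ξ > 0` with `ξᵀ A = 0` (it exists since `A` is an irreducible Metzler matrix with zero row
sums) and, in one coordinate, let `e ⊥ ξ` be the deviations of the agents from their
`ξ`-weighted mean. As `diag ξ A` and `Ã` have zero row and column sums, their quadratic forms
equal `-½ ∑ mᵢⱼ (eᵢ - eⱼ)²`, which by irreducibility vanishes only on constants; compactness of
the unit sphere of `ξ^⊥` then gives `eᵀ (diag ξ A) e ≤ λ₁ eᵀ Ã e` and `eᵀ Ã e ≤ -λ₂ ∑ ξᵢ eᵢ²`.
The coupling contributes `2 c γₖ eᵀ (diag ξ A) e` to the derivative of `W = ∑ᵢ ξᵢ ‖xᵢ - x̄‖²`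
and `ċ = -(α / 2) ∑ₖ eᵀ Ã e`, so for `V = W + β (c - L)²` with `β = 2 γ₀ λ₁ / α` and `L` large
the terms in `c` cancel and QUAD yields `V̇ ≤ -2ϖ W`. Hence `c`, nondecreasing and bounded
through `V`, converges; so do `V` and `W`, and `W → 0` because `V ≥ 0` cannot decrease at a
rate bounded away from zero forever.
-/

open Finset Filter Matrix Topology

section LaplacianForm

variable {ι : Type*} {M : Matrix ι ι ℝ}

theorem mul_sq_sub_nonneg (hoff : ∀ i j, i ≠ j → 0 ≤ M i j) (v : ι → ℝ) (i j : ι) :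
    0 ≤ M i j * (v i - v j) ^ 2 := by
  rcases eq_or_ne i j with rfl | hij
  · simp
  · exact mul_nonneg (hoff i j hij) (sq_nonneg _)

variable [Fintype ι]

theorem mulVec_const_eq_zero (hrow : ∀ i, ∑ j, M i j = 0) (m : ℝ) :
    M *ᵥ Function.const ι m = 0 := by
  ext i
  simp [mulVec, dotProduct, ← Finset.sum_mul, hrow i]

theorem const_vecMul_eq_zero (hcol : ∀ j, ∑ i, M i j = 0) (m : ℝ) :
    Function.const ι m ᵥ* M = 0 := by
  ext j
  simp [vecMul, dotProduct, ← Finset.mul_sum, hcol j]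

theorem dotProduct_mulVec_sub_const (hrow : ∀ i, ∑ j, M i j = 0)
    (hcol : ∀ j, ∑ i, M i j = 0) (v : ι → ℝ) (m : ℝ) :
    (v - Function.const ι m) ⬝ᵥ M *ᵥ (v - Function.const ι m) = v ⬝ᵥ M *ᵥ v := by
  rw [mulVec_sub, mulVec_const_eq_zero hrow, sub_zero, sub_dotProduct, dotProduct_mulVec
    (Function.const ι m), const_vecMul_eq_zero hcol, zero_dotProduct, sub_zero]

theorem dotProduct_mulVec_eq_neg_half_sum_sq (hrow : ∀ i, ∑ j, M i j = 0)
    (hcol : ∀ j, ∑ i, M i j = 0) (v : ι → ℝ) :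
    v ⬝ᵥ M *ᵥ v = -(1 / 2) * ∑ i, ∑ j, M i j * (v i - v j) ^ 2 := by
  have hi : ∑ i, ∑ j, M i j * v i ^ 2 = 0 := by
    simp [← Finset.sum_mul, hrow]
  have hj : ∑ i, ∑ j, M i j * v j ^ 2 = 0 := by
    rw [Finset.sum_comm]; simp [← Finset.sum_mul, hcol]
  have hv : v ⬝ᵥ M *ᵥ v = ∑ i, ∑ j, M i j * v i * v j := by
    simp only [dotProduct, mulVec, Finset.mul_sum]
    exact Finset.sum_congr rfl fun i _ => Finset.sum_congr rfl fun j _ => by ring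
  have hexp : ∑ i, ∑ j, M i j * (v i - v j) ^ 2 =
      ∑ i, ∑ j, M i j * v i ^ 2 + ∑ i, ∑ j, M i j * v j ^ 2
        - 2 * ∑ i, ∑ j, M i j * v i * v j := by
    simp only [Finset.mul_sum, ← Finset.sum_add_distrib, ← Finset.sum_sub_distrib]
    exact Finset.sum_congr rfl fun i _ => Finset.sum_congr rfl fun j _ => by ring
  rw [hexp, hi, hj, hv]
  ring

theorem dotProduct_mulVec_nonpos (hrow : ∀ i, ∑ j, M i j = 0) (hcol : ∀ j, ∑ i, M i j = 0)
    (hoff : ∀ i j, i ≠ j → 0 ≤ M i j) (v : ι → ℝ) : v ⬝ᵥ M *ᵥ v ≤ 0 := by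
  rw [dotProduct_mulVec_eq_neg_half_sum_sq hrow hcol]
  have := sum_nonneg fun i (_ : i ∈ univ) => sum_nonneg fun j (_ : j ∈ univ) =>
    mul_sq_sub_nonneg hoff v i j
  linarith

theorem eq_of_dotProduct_mulVec_eq_zero (hrow : ∀ i, ∑ j, M i j = 0)
    (hcol : ∀ j, ∑ i, M i j = 0) (hoff : ∀ i j, i ≠ j → 0 ≤ M i j)
    (hirr : ∀ S : Finset ι, S.Nonempty → S ≠ univ → ∃ i ∈ S, ∃ j, j ∉ S ∧ M i j ≠ 0)
    {v : ι → ℝ} (hv : v ⬝ᵥ M *ᵥ v = 0) (i j : ι) : v i = v j := by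
  classical
  have hterm : ∀ a b, M a b * (v a - v b) ^ 2 = 0 := by
    rw [dotProduct_mulVec_eq_neg_half_sum_sq hrow hcol] at hv
    have hsum : ∑ a, ∑ b, M a b * (v a - v b) ^ 2 = 0 := by linarith
    rw [sum_eq_zero_iff_of_nonneg fun a _ => sum_nonneg fun b _ =>
      mul_sq_sub_nonneg hoff v a b] at hsum
    exact fun a b => (sum_eq_zero_iff_of_nonneg fun b _ => mul_sq_sub_nonneg hoff v a b).1
      (hsum a (mem_univ a)) b (mem_univ b)
  by_contra hij
  obtain ⟨a, ha, b, hb, hab⟩ := hirr {k | v k = v i} ⟨i, by simp⟩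
    fun h => hij (by simpa using h.ge (mem_univ j) : v j = v i).symm
  simp only [mem_filter, mem_univ, true_and] at ha hb
  have : v a = v b := by simpa [hab, sub_eq_zero] using hterm a b
  exact hb (this ▸ ha)

theorem dotProduct_mulVec_neg (hrow : ∀ i, ∑ j, M i j = 0) (hcol : ∀ j, ∑ i, M i j = 0)
    (hoff : ∀ i j, i ≠ j → 0 ≤ M i j)
    (hirr : ∀ S : Finset ι, S.Nonempty → S ≠ univ → ∃ i ∈ S, ∃ j, j ∉ S ∧ M i j ≠ 0)
    {ξ : ι → ℝ} (hξ : ∀ i, 0 < ξ i) {v : ι → ℝ} (hξv : ξ ⬝ᵥ v = 0) (hv : v ≠ 0) :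
    v ⬝ᵥ M *ᵥ v < 0 := by
  refine (dotProduct_mulVec_nonpos hrow hcol hoff v).lt_of_ne fun h => hv ?_
  obtain ⟨i, hi⟩ := Function.ne_iff.1 hv
  have hconst : v = Function.const ι (v i) :=
    funext fun j => eq_of_dotProduct_mulVec_eq_zero hrow hcol hoff hirr h j i
  have hsum : v i * ∑ j, ξ j = 0 := by
    rw [hconst] at hξv
    simpa [dotProduct, mul_comm, Finset.mul_sum] using hξv
  have hpos : 0 < ∑ j, ξ j := sum_pos (fun j _ => hξ j) ⟨i, mem_univ i⟩
  exact absurd ((mul_eq_zero.1 hsum).resolve_right hpos.ne') hi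

end LaplacianForm

theorem exists_pos_le_neg_mul_of_homogeneous {E : Type*} [NormedAddCommGroup E]
    [NormedSpace ℝ E] [ProperSpace E] {S : Set E} (hS : IsClosed S)
    (hSsmul : ∀ r : ℝ, ∀ v ∈ S, r • v ∈ S) {q p : E → ℝ} (hq : Continuous q)
    (hp : Continuous p) (hq2 : ∀ (r : ℝ) v, q (r • v) = r ^ 2 * q v)
    (hp2 : ∀ (r : ℝ) v, p (r • v) = r ^ 2 * p v) (hneg : ∀ v ∈ S, v ≠ 0 → q v < 0) :
    ∃ l > 0, ∀ v ∈ S, q v ≤ -l * p v := by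
  have hK : IsCompact (Metric.sphere (0 : E) 1 ∩ S) := (isCompact_sphere 0 1).inter_right hS
  obtain ⟨m, hm, hqm⟩ := hK.exists_forall_le' hq.neg.continuousOn (a := 0) fun v hv =>
    neg_pos.2 (hneg v hv.2 (ne_zero_of_mem_unit_sphere ⟨v, hv.1⟩))
  obtain ⟨P, hP⟩ := (hK.image_of_continuousOn hp.continuousOn).bddAbove
  have hP1 : 0 < max P 1 := lt_max_of_lt_right one_pos
  refine ⟨m / max P 1, div_pos hm hP1, fun v hv => ?_⟩
  rcases eq_or_ne v 0 with rfl | hv0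
  · have h0 : ∀ g : E → ℝ, (∀ (r : ℝ) v, g (r • v) = r ^ 2 * g v) → g 0 = 0 :=
      fun g hg => by simpa using hg 0 0
    simp [h0 q hq2, h0 p hp2]
  set r := ‖v‖
  have hr : 0 < r := norm_pos_iff.2 hv0
  have hw : r⁻¹ • v ∈ Metric.sphere (0 : E) 1 ∩ S :=
    ⟨by simp [norm_smul, hr.ne', r], hSsmul _ v hv⟩
  have hvw : v = r • r⁻¹ • v := by rw [smul_smul, mul_inv_cancel₀ hr.ne', one_smul]
  have hqv : q v ≤ -(r ^ 2 * m) := by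
    have hmw : m ≤ -q (r⁻¹ • v) := hqm _ hw
    rw [hvw, hq2]
    nlinarith [mul_le_mul_of_nonneg_left hmw (sq_nonneg r)]
  have hpv : p v ≤ r ^ 2 * max P 1 := by
    rw [hvw, hp2]
    exact mul_le_mul_of_nonneg_left ((hP ⟨_, hw, rfl⟩).trans (le_max_left _ _)) (sq_nonneg r)
  calc q v ≤ -(m / max P 1) * (r ^ 2 * max P 1) := by
        rw [show -(m / max P 1) * (r ^ 2 * max P 1) = -(r ^ 2 * m) by field_simp]; exact hqv
    _ ≤ -(m / max P 1) * p v :=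
        mul_le_mul_of_nonpos_left hpv (neg_nonpos.2 (div_pos hm hP1).le)

theorem exists_pos_dotProduct_mulVec_le_neg_mul {ι : Type*} [Fintype ι] {M : Matrix ι ι ℝ}
    (hrow : ∀ i, ∑ j, M i j = 0) (hcol : ∀ j, ∑ i, M i j = 0)
    (hoff : ∀ i j, i ≠ j → 0 ≤ M i j)
    (hirr : ∀ S : Finset ι, S.Nonempty → S ≠ univ → ∃ i ∈ S, ∃ j, j ∉ S ∧ M i j ≠ 0)
    {ξ : ι → ℝ} (hξ : ∀ i, 0 < ξ i) {p : (ι → ℝ) → ℝ} (hp : Continuous p)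
    (hp2 : ∀ (r : ℝ) v, p (r • v) = r ^ 2 * p v) :
    ∃ l > 0, ∀ v, ξ ⬝ᵥ v = 0 → v ⬝ᵥ M *ᵥ v ≤ -l * p v :=
  exists_pos_le_neg_mul_of_homogeneous (S := {v | ξ ⬝ᵥ v = 0})
    (isClosed_eq (continuous_const.dotProduct continuous_id) continuous_const)
    (fun r v hv => by simp_all [dotProduct_smul])
    (continuous_id.dotProduct (continuous_const.matrix_mulVec continuous_id)) hp
    (fun r v => by simp only [mulVec_smul, dotProduct_smul, smul_dotProduct, smul_eq_mul]; ring)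
    hp2 fun _ hv hv0 => dotProduct_mulVec_neg hrow hcol hoff hirr hξ hv hv0

section PositiveLeftKernel

variable {ι : Type*} [Fintype ι] {A : Matrix ι ι ℝ}

theorem pos_of_vecMul_eq_zero (hoff : ∀ i j, i ≠ j → 0 ≤ A i j) (hrow : ∀ i, ∑ j, A i j = 0)
    (hirr : ∀ S : Finset ι, S.Nonempty → S ≠ univ → ∃ i ∈ S, ∃ j, j ∉ S ∧ A i j ≠ 0)
    {w : ι → ℝ} (hw : w ᵥ* A = 0) (hpos : ∃ i, 0 < w i) (i : ι) : 0 < w i := by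
  classical
  by_contra hi
  obtain ⟨i₀, hi₀⟩ := hpos
  set P := univ.filter (0 < w ·)
  obtain ⟨a, ha, b, hb, hab⟩ := hirr P ⟨i₀, by simpa [P] using hi₀⟩
    fun h => hi (by simpa [P] using h.ge (mem_univ i))
  have hmemP : ∀ {k}, k ∈ P ↔ 0 < w k := by simp [P]
  have hrowP : ∀ k, ∑ j ∈ P, A k j = -∑ j ∈ Pᶜ, A k j := fun k => by
    linarith [sum_add_sum_compl P (A k), hrow k]
  have hterm : ∀ k ∈ univ, w k * ∑ j ∈ P, A k j ≤ 0 := fun k _ => by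
    by_cases hk : k ∈ P
    · rw [hrowP]
      exact mul_nonpos_of_nonneg_of_nonpos (hmemP.1 hk).le <| neg_nonpos.2 <|
        sum_nonneg fun j hj => hoff k j fun h => mem_compl.1 hj (h ▸ hk)
    · exact mul_nonpos_of_nonpos_of_nonneg (not_lt.1 (hmemP.not.1 hk)) <|
        sum_nonneg fun j hj => hoff k j fun h => hk (h ▸ hj)
  have hstrict : w a * ∑ j ∈ P, A a j < 0 := by
    have hAab : 0 < A a b := (hoff a b fun h => hb (h ▸ ha)).lt_of_ne' hab
    have hcompl : 0 < ∑ j ∈ Pᶜ, A a j :=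
      hAab.trans_le <| single_le_sum (fun j hj => hoff a j fun h => mem_compl.1 hj (h ▸ ha))
        (mem_compl.2 hb)
    rw [hrowP]
    exact mul_neg_of_pos_of_neg (hmemP.1 ha) (neg_neg_of_pos hcompl)
  have hzero : ∑ k, w k * ∑ j ∈ P, A k j = 0 := by
    simp_rw [mul_sum]
    rw [sum_comm]
    refine sum_eq_zero fun j _ => ?_
    simpa [vecMul, dotProduct] using congrFun hw j
  have := sum_lt_sum hterm ⟨a, mem_univ a, hstrict⟩
  simp only [sum_const_zero] at this
  linarith

theorem exists_pos_vecMul_eq_zero [Nonempty ι] (hoff : ∀ i j, i ≠ j → 0 ≤ A i j)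
    (hrow : ∀ i, ∑ j, A i j = 0)
    (hirr : ∀ S : Finset ι, S.Nonempty → S ≠ univ → ∃ i ∈ S, ∃ j, j ∉ S ∧ A i j ≠ 0) :
    ∃ ξ : ι → ℝ, (∀ i, 0 < ξ i) ∧ ξ ᵥ* A = 0 := by
  classical
  have hdet : A.det = 0 := exists_mulVec_eq_zero_iff.1
    ⟨Function.const ι 1, Function.const_ne_zero.2 one_ne_zero, by
      ext i; simp [mulVec, dotProduct, hrow i]⟩
  obtain ⟨w, hw0, hw⟩ := exists_vecMul_eq_zero_iff.2 hdet
  obtain ⟨i, hi⟩ := Function.ne_iff.1 hw0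
  rcases (Ne.lt_or_gt hi : w i < 0 ∨ 0 < w i) with hneg | hpos
  · exact ⟨-w, pos_of_vecMul_eq_zero hoff hrow hirr (by simp [neg_vecMul, hw])
      ⟨i, by simpa using hneg⟩, by simp [neg_vecMul, hw]⟩
  · exact ⟨w, pos_of_vecMul_eq_zero hoff hrow hirr hw ⟨i, hpos⟩, hw⟩

end PositiveLeftKernel

noncomputable section WeightedVariance

variable {ι : Type*} [Fintype ι] (ξ : ι → ℝ)

def weightedMean (y : ι → ℝ) : ℝ := (ξ ⬝ᵥ y) / ∑ i, ξ i

def weightedDev (y : ι → ℝ) : ι → ℝ := y - Function.const ι (weightedMean ξ y)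

def weightedVar (y : ι → ℝ) : ℝ := ∑ i, ξ i * weightedDev ξ y i ^ 2

variable {ξ}

theorem dotProduct_weightedDev (hξ : ∑ i, ξ i ≠ 0) (y : ι → ℝ) : ξ ⬝ᵥ weightedDev ξ y = 0 := by
  simp only [weightedDev, weightedMean, dotProduct_sub]
  rw [show ξ ⬝ᵥ Function.const ι ((ξ ⬝ᵥ y) / ∑ i, ξ i) = (ξ ⬝ᵥ y) / (∑ i, ξ i) * ∑ i, ξ i by
    simp [dotProduct, ← sum_mul, mul_comm], div_mul_cancel₀ _ hξ, sub_self]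

theorem mul_weightedDev_sq_le_weightedVar (hξ : ∀ i, 0 ≤ ξ i) (y : ι → ℝ) (i : ι) :
    ξ i * weightedDev ξ y i ^ 2 ≤ weightedVar ξ y :=
  single_le_sum (f := fun i => ξ i * weightedDev ξ y i ^ 2)
    (fun j _ => mul_nonneg (hξ j) (sq_nonneg _)) (mem_univ i)

theorem weightedVar_nonneg (hξ : ∀ i, 0 ≤ ξ i) (y : ι → ℝ) : 0 ≤ weightedVar ξ y :=
  sum_nonneg fun i _ => mul_nonneg (hξ i) (sq_nonneg _)

theorem hasDerivAt_weightedVar (hξ : ∑ i, ξ i ≠ 0) {y : ℝ → ι → ℝ} {y' : ι → ℝ} {t : ℝ}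
    (hy : ∀ i, HasDerivAt (fun s => y s i) (y' i) t) :
    HasDerivAt (fun s => weightedVar ξ (y s)) (2 * ∑ i, ξ i * weightedDev ξ (y t) i * y' i) t := by
  have hmean : HasDerivAt (fun s => weightedMean ξ (y s)) (weightedMean ξ y') t := by
    simp only [weightedMean, dotProduct]
    exact (HasDerivAt.fun_sum fun i _ => (hy i).const_mul (ξ i)).div_const _
  have hvar : HasDerivAt (fun s => ∑ i, ξ i * (y s i - weightedMean ξ (y s)) ^ 2)
      (∑ i, ξ i * (2 * (y t i - weightedMean ξ (y t)) * (y' i - weightedMean ξ y'))) t :=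
    HasDerivAt.fun_sum fun i _ => by simpa using (((hy i).sub hmean).fun_pow 2).const_mul (ξ i)
  refine hvar.congr_deriv ?_
  have hcancel : ∑ i, ξ i * (y t i - weightedMean ξ (y t)) = 0 := by
    simpa [dotProduct, weightedDev] using dotProduct_weightedDev hξ (y t)
  simp only [weightedDev, Pi.sub_apply, Function.const_apply]
  calc _ = 2 * ∑ i, ξ i * (y t i - weightedMean ξ (y t)) * y' i
        - 2 * (∑ i, ξ i * (y t i - weightedMean ξ (y t))) * weightedMean ξ y' := by
        rw [mul_sum, mul_sum, sum_mul, ← sum_sub_distrib]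
        exact sum_congr rfl fun i _ => by ring
    _ = _ := by rw [hcancel]; ring

end WeightedVariance

section RealFunctions

open Set

variable {f f' : ℝ → ℝ} {a : ℝ}

theorem monotoneOn_Ici_of_hasDerivAt_nonneg (hf : ∀ t, a ≤ t → HasDerivAt f (f' t) t)
    (hf' : ∀ t, a ≤ t → 0 ≤ f' t) : MonotoneOn f (Ici a) :=
  monotoneOn_of_hasDerivWithinAt_nonneg (convex_Ici a)
    (fun t ht => (hf t ht).continuousAt.continuousWithinAt)
    (fun t ht => (hf t (interior_subset ht)).hasDerivWithinAt)
    fun t ht => hf' t (interior_subset ht)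

theorem exists_tendsto_of_monotoneOn_Ici {B : ℝ} (hf : MonotoneOn f (Ici a))
    (hB : ∀ t, a ≤ t → f t ≤ B) : ∃ l, Tendsto f atTop (𝓝 l) := by
  have hmono : Monotone fun t => f (max t a) := fun s t hst =>
    hf (le_max_right s a) (le_max_right t a) (max_le_max_right a hst)
  refine ⟨_, (tendsto_atTop_ciSup hmono ⟨B, ?_⟩).congr' ?_⟩
  · rintro _ ⟨t, rfl⟩
    exact hB _ (le_max_right t a)
  · filter_upwards [eventually_ge_atTop a] with t ht
    rw [max_eq_left ht]

theorem nonpos_of_tendsto_of_hasDerivAt_le_neg_s13 {g : ℝ → ℝ} {m ℓ : ℝ}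
    (hf : ∀ t, a ≤ t → HasDerivAt f (f' t) t) (hf' : ∀ t, a ≤ t → f' t ≤ -g t)
    (hm : ∀ t, a ≤ t → m ≤ f t) (hg : Tendsto g atTop (𝓝 ℓ)) : ℓ ≤ 0 := by
  by_contra! hℓ
  obtain ⟨T, hT⟩ := eventually_atTop.1 <| (eventually_ge_atTop a).and <|
    hg.eventually (eventually_ge_nhds (half_lt_self hℓ))
  have hmono : MonotoneOn (fun t => -f t - ℓ / 2 * t) (Ici T) :=
    monotoneOn_Ici_of_hasDerivAt_nonneg
      (fun t ht => ((hf t ((hT T le_rfl).1.trans ht)).neg.sub ((hasDerivAt_id t).const_mul _)))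
      fun t ht => by
        have := hf' t ((hT T le_rfl).1.trans ht)
        linarith [(hT t ht).2]
  set t := T + 2 * (f T - m) / ℓ + 1
  have hTt : T ≤ t := by
    have : 0 ≤ 2 * (f T - m) / ℓ := div_nonneg (by linarith [hm T (hT T le_rfl).1]) hℓ.le
    linarith
  have hft := hmono self_mem_Ici hTt hTt
  have hmt := hm t ((hT T le_rfl).1.trans hTt)
  have : ℓ / 2 * (t - T) = f T - m + ℓ / 2 := by simp only [t]; field_simp; ring
  linarith

theorem tendsto_of_lyapunov {W W' c c' : ℝ → ℝ} {β L ϖ : ℝ} (hβ : 0 < β) (hϖ : 0 < ϖ)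
    (hW : ∀ t, 0 ≤ t → HasDerivAt W (W' t) t) (hc : ∀ t, 0 ≤ t → HasDerivAt c (c' t) t)
    (hW0 : ∀ t, 0 ≤ t → 0 ≤ W t) (hc' : ∀ t, 0 ≤ t → 0 ≤ c' t)
    (hV' : ∀ t, 0 ≤ t → W' t + 2 * β * (c t - L) * c' t ≤ -ϖ * W t) :
    Tendsto W atTop (𝓝 0) ∧ ∃ c₀, Tendsto c atTop (𝓝 c₀) := by
  set V := fun t => W t + β * (c t - L) ^ 2
  have hV : ∀ t, 0 ≤ t → HasDerivAt V (W' t + 2 * β * (c t - L) * c' t) t := fun t ht =>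
    ((hW t ht).add ((((hc t ht).sub_const L).pow 2).const_mul β)).congr_deriv (by ring)
  have hV0 : ∀ t, 0 ≤ t → 0 ≤ V t := fun t ht =>
    add_nonneg (hW0 t ht) (mul_nonneg hβ.le (sq_nonneg _))
  have hVanti : MonotoneOn (fun t => -V t) (Ici 0) :=
    monotoneOn_Ici_of_hasDerivAt_nonneg (fun t ht => (hV t ht).neg) fun t ht => by
      nlinarith [hV' t ht, hW0 t ht]
  have hcbdd : ∀ t, 0 ≤ t → c t ≤ L + (V 0 / β + 1) / 2 := fun t ht => by
    have hVt : V t ≤ V 0 := neg_le_neg_iff.1 (hVanti self_mem_Ici ht ht)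
    have : (c t - L) ^ 2 ≤ V 0 / β := by
      rw [le_div_iff₀ hβ]
      linarith [hW0 t ht]
    nlinarith [sq_nonneg (c t - L - 1)]
  obtain ⟨c₀, hc₀⟩ := exists_tendsto_of_monotoneOn_Ici
    (monotoneOn_Ici_of_hasDerivAt_nonneg hc hc') hcbdd
  obtain ⟨v, hv⟩ := exists_tendsto_of_monotoneOn_Ici hVanti fun t ht => neg_nonpos.2 (hV0 t ht)
  set ℓ := -v - β * (c₀ - L) ^ 2
  have hWℓ : Tendsto W atTop (𝓝 ℓ) :=
    (hv.neg.sub (((hc₀.sub_const L).pow 2).const_mul β)).congr fun t => by simp [V]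
  have hℓ : ℓ = 0 := by
    have := nonpos_of_tendsto_of_hasDerivAt_le_neg_s13 hV
      (fun t ht => (hV' t ht).trans_eq (neg_mul _ _)) hV0 (hWℓ.const_mul ϖ)
    have : 0 ≤ ℓ := ge_of_tendsto hWℓ (eventually_atTop.2 ⟨0, hW0⟩)
    nlinarith
  exact ⟨hℓ ▸ hWℓ, c₀, hc₀⟩

end RealFunctions

section CoupledSystem

variable {ι κ : Type*} [Fintype ι] [Fintype κ]

noncomputable def disagreement (ξ : ι → ℝ) (X : ι → κ → ℝ) : ℝ :=
  ∑ k, weightedVar ξ (fun i => X i k)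

theorem hasDerivAt_disagreement {ξ : ι → ℝ} (hξ : ∑ i, ξ i ≠ 0) {x : ι → ℝ → κ → ℝ}
    {x' : ι → κ → ℝ} {t : ℝ} (hx : ∀ i, HasDerivAt (x i) (x' i) t) :
    HasDerivAt (fun s => disagreement ξ (fun i => x i s))
      (2 * ∑ k, ∑ i, ξ i * weightedDev ξ (fun i => x i t k) i * x' i k) t := by
  rw [mul_sum]
  exact HasDerivAt.fun_sum fun k _ => hasDerivAt_weightedVar hξ fun i => hasDerivAt_pi.1 (hx i) k

theorem tendsto_norm_sub_of_tendsto_disagreement {ξ : ι → ℝ} (hξ : ∀ i, 0 < ξ i)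
    {x : ι → ℝ → κ → ℝ} (h : Tendsto (fun t => disagreement ξ (fun i => x i t)) atTop (𝓝 0))
    (i j : ι) : Tendsto (fun t => ‖x i t - x j t‖) atTop (𝓝 0) := by
  set m : ℝ → κ → ℝ := fun t k => weightedMean ξ (fun i => x i t k)
  have hdev : ∀ i t, ‖x i t - m t‖ ≤ √(disagreement ξ (fun i => x i t) / ξ i) := fun i t => by
    refine (pi_norm_le_iff_of_nonneg (Real.sqrt_nonneg _)).2 fun k => ?_
    rw [Real.norm_eq_abs]
    refine Real.abs_le_sqrt ?_
    rw [le_div_iff₀ (hξ i), mul_comm]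
    exact (mul_weightedDev_sq_le_weightedVar (fun i => (hξ i).le) _ i).trans
      (single_le_sum (f := fun k => weightedVar ξ fun i => x i t k)
        (fun k _ => weightedVar_nonneg (fun i => (hξ i).le) _) (mem_univ k))
  have hlim : ∀ i, Tendsto (fun t => √(disagreement ξ (fun i => x i t) / ξ i)) atTop (𝓝 0) :=
    fun i => by simpa using (h.div_const (ξ i)).sqrt
  refine squeeze_zero (fun t => norm_nonneg _) (fun t => ?_) (by simpa using (hlim i).add (hlim j))
  calc ‖x i t - x j t‖ = ‖(x i t - m t) - (x j t - m t)‖ := by rw [sub_sub_sub_cancel_right]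
    _ ≤ ‖x i t - m t‖ + ‖x j t - m t‖ := norm_sub_le _ _
    _ ≤ _ := add_le_add (hdev i t) (hdev j t)

theorem sum_mul_sum_mul_eq_sum_dotProduct_mulVec (M : Matrix ι ι ℝ) (X : ι → κ → ℝ) :
    ∑ i, ∑ j, M i j * ∑ k, X i k * X j k =
      ∑ k, (fun i => X i k) ⬝ᵥ M *ᵥ (fun i => X i k) := by
  simp only [dotProduct, mulVec, mul_sum]
  calc _ = ∑ i, ∑ k, ∑ j, M i j * (X i k * X j k) := sum_congr rfl fun i _ => sum_comm
    _ = ∑ k, ∑ i, ∑ j, M i j * (X i k * X j k) := sum_comm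
    _ = _ := sum_congr rfl fun k _ => sum_congr rfl fun i _ => sum_congr rfl fun j _ => by ring

theorem sum_erase_mul_sub_eq_mulVec [DecidableEq ι] {A : Matrix ι ι ℝ}
    (hrow : ∀ i, ∑ j, A i j = 0) (y : ι → ℝ) (i : ι) :
    ∑ j ∈ univ.erase i, A i j * (y j - y i) = (A *ᵥ y) i := by
  rw [sum_erase _ (by simp)]
  simp [mulVec, dotProduct, mul_sub, sum_sub_distrib, ← sum_mul, hrow i]

theorem sum_mul_weightedDev_mul_add_coupling [DecidableEq ι] {A : Matrix ι ι ℝ}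
    (hrow : ∀ i, ∑ j, A i j = 0) (ξ y u : ι → ℝ) (c γ : ℝ) :
    ∑ i, ξ i * weightedDev ξ y i * (u i + c * ∑ j ∈ univ.erase i, A i j * (γ * (y j - y i))) =
      ∑ i, ξ i * weightedDev ξ y i * u i +
        c * γ * (weightedDev ξ y ⬝ᵥ (diagonal ξ * A) *ᵥ weightedDev ξ y) := by
  have hcoupling : ∀ i, ∑ j ∈ univ.erase i, A i j * (γ * (y j - y i)) =
      γ * (A *ᵥ weightedDev ξ y) i := fun i => by
    rw [weightedDev, mulVec_sub, mulVec_const_eq_zero hrow, sub_zero,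
      ← sum_erase_mul_sub_eq_mulVec hrow, mul_sum]
    exact sum_congr rfl fun j _ => by ring
  simp only [hcoupling, dotProduct, ← mulVec_mulVec, mulVec_diagonal]
  rw [mul_sum, ← sum_add_distrib]
  exact sum_congr rfl fun i _ => by ring

theorem sum_weightedDev_mul_le_of_quad {ξ : ι → ℝ} (hξ0 : ∀ i, 0 ≤ ξ i) (hξ : ∑ i, ξ i ≠ 0)
    {g : (κ → ℝ) → κ → ℝ} {δ : κ → ℝ} {ϖ : ℝ}
    (hg : ∀ y z : κ → ℝ, (∑ k, (y k - z k) * (g y k - g z k)) - (∑ k, δ k * (y k - z k) ^ 2)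
      ≤ -ϖ * ∑ k, (y k - z k) ^ 2) (X : ι → κ → ℝ) :
    ∑ k, ∑ i, ξ i * weightedDev ξ (fun i => X i k) i * g (X i) k ≤
      ∑ k, (δ k - ϖ) * weightedVar ξ (fun i => X i k) := by
  set m : κ → ℝ := fun k => weightedMean ξ (fun i => X i k)
  -- the deviations have zero weighted mean, so `g` may be recentred at `m`
  have hzero : ∀ k, ∑ i, ξ i * weightedDev ξ (fun i => X i k) i * g m k = 0 := fun k => by
    have := dotProduct_weightedDev hξ fun i => X i k
    simp only [dotProduct] at this
    rw [← sum_mul, this, zero_mul]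
  calc _ = ∑ k, ∑ i, ξ i * weightedDev ξ (fun i => X i k) i * (g (X i) k - g m k) := by
        simp only [mul_sub, sum_sub_distrib, hzero, sub_zero]
    _ = ∑ i, ξ i * ∑ k, (X i k - m k) * (g (X i) k - g m k) := by
        rw [sum_comm]
        simp only [mul_sum, weightedDev, Pi.sub_apply, Function.const_apply]
        exact sum_congr rfl fun i _ => sum_congr rfl fun k _ => by ring
    _ ≤ ∑ i, ξ i * ∑ k, (δ k - ϖ) * (X i k - m k) ^ 2 := by
        refine sum_le_sum fun i _ => mul_le_mul_of_nonneg_left ?_ (hξ0 i)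
        have hsplit : ∑ k, (δ k - ϖ) * (X i k - m k) ^ 2 =
            ∑ k, δ k * (X i k - m k) ^ 2 - ϖ * ∑ k, (X i k - m k) ^ 2 := by
          rw [mul_sum, ← sum_sub_distrib]
          exact sum_congr rfl fun k _ => by ring
        linarith [hg (X i) m]
    _ = _ := by
        simp only [weightedVar, weightedDev, Pi.sub_apply, Function.const_apply, mul_sum]
        rw [sum_comm]
        exact sum_congr rfl fun k _ => sum_congr rfl fun i _ => by ring

/-- The gain error `c - L` is weighed so that the terms in `c` cancel. -/
theorem gain_terms_le {c γk γ₀ δk D l₁ l₂ qA qT w : ℝ} (hγ₀ : 0 < γ₀) (hD : 0 ≤ D)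
    (hl₁ : 0 < l₁) (hl₂ : 0 < l₂) (hc : 0 ≤ c) (hγk : γ₀ ≤ γk) (hδk : δk ≤ D) (hw : 0 ≤ w)
    (hA : qA ≤ l₁ * qT) (hT : qT ≤ -l₂ * w) :
    c * γk * qA - γ₀ * l₁ * (c - D / (γ₀ * l₁ * l₂)) * qT ≤ -(δk * w) := by
  have hqT : qT ≤ 0 := hT.trans (by nlinarith)
  have h1 : c * γk * qA ≤ c * γk * (l₁ * qT) :=
    mul_le_mul_of_nonneg_left hA (mul_nonneg hc (hγ₀.le.trans hγk))
  have h2 : c * (γk - γ₀) * (l₁ * qT) ≤ 0 :=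
    mul_nonpos_of_nonneg_of_nonpos (mul_nonneg hc (sub_nonneg.2 hγk))
      (mul_nonpos_of_nonneg_of_nonpos hl₁.le hqT)
  have h3 : D / (γ₀ * l₁ * l₂) * qT ≤ D / (γ₀ * l₁ * l₂) * (-l₂ * w) :=
    mul_le_mul_of_nonneg_left hT (by positivity)
  have hL : γ₀ * l₁ * (D / (γ₀ * l₁ * l₂)) * l₂ = D := by field_simp
  have h4 : δk * w ≤ D * w := mul_le_mul_of_nonneg_right hδk hw
  nlinarith

theorem lyapunov_deriv_le [Nonempty ι] [DecidableEq ι] {A At : Matrix ι ι ℝ} {ξ : ι → ℝ}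
    {γ δ : κ → ℝ} {g : (κ → ℝ) → κ → ℝ} {α ϖ γ₀ D l₁ l₂ c : ℝ} (hα : 0 < α) (hγ₀ : 0 < γ₀)
    (hD : 0 ≤ D) (hl₁ : 0 < l₁) (hl₂ : 0 < l₂) (hc : 0 ≤ c)
    (hrowA : ∀ i, ∑ j, A i j = 0) (hrowAt : ∀ i, ∑ j, At i j = 0)
    (hcolAt : ∀ j, ∑ i, At i j = 0) (hξ : ∀ i, 0 < ξ i) (hγ : ∀ k, γ₀ ≤ γ k)
    (hδ : ∀ k, δ k ≤ D)
    (hcomp : ∀ v, ξ ⬝ᵥ v = 0 → v ⬝ᵥ (diagonal ξ * A) *ᵥ v ≤ l₁ * (v ⬝ᵥ At *ᵥ v))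
    (hgap : ∀ v, ξ ⬝ᵥ v = 0 → v ⬝ᵥ At *ᵥ v ≤ -l₂ * ∑ i, ξ i * v i ^ 2)
    (hg : ∀ y z : κ → ℝ, (∑ k, (y k - z k) * (g y k - g z k)) - (∑ k, δ k * (y k - z k) ^ 2)
      ≤ -ϖ * ∑ k, (y k - z k) ^ 2) (X : ι → κ → ℝ) :
    2 * ∑ k, ∑ i, ξ i * weightedDev ξ (fun i => X i k) i *
        (g (X i) k + c * ∑ j ∈ univ.erase i, A i j * (γ k * (X j k - X i k))) +
      2 * (2 * γ₀ * l₁ / α) * (c - D / (γ₀ * l₁ * l₂)) *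
        (-(α / 2) * ∑ i, ∑ j, At i j * ∑ k, X i k * X j k) ≤
      -(2 * ϖ) * disagreement ξ X := by
  have hsum : ∑ i, ξ i ≠ 0 := (sum_pos (fun i _ => hξ i) univ_nonempty).ne'
  have hv : ∀ k, ξ ⬝ᵥ weightedDev ξ (fun i => X i k) = 0 := fun k =>
    dotProduct_weightedDev hsum _
  set L := D / (γ₀ * l₁ * l₂)
  set qA : κ → ℝ := fun k =>
    weightedDev ξ (fun i => X i k) ⬝ᵥ (diagonal ξ * A) *ᵥ weightedDev ξ (fun i => X i k)
  set qT : κ → ℝ := fun k =>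
    weightedDev ξ (fun i => X i k) ⬝ᵥ At *ᵥ weightedDev ξ (fun i => X i k)
  set w : κ → ℝ := fun k => weightedVar ξ (fun i => X i k)
  have hsplit : ∀ k, ∑ i, ξ i * weightedDev ξ (fun i => X i k) i *
      (g (X i) k + c * ∑ j ∈ univ.erase i, A i j * (γ k * (X j k - X i k))) =
      ∑ i, ξ i * weightedDev ξ (fun i => X i k) i * g (X i) k + c * γ k * qA k := fun k =>
    sum_mul_weightedDev_mul_add_coupling hrowA ξ (fun i => X i k) (fun i => g (X i) k) c (γ k)
  have hQ : ∑ i, ∑ j, At i j * ∑ k, X i k * X j k = ∑ k, qT k := by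
    rw [sum_mul_sum_mul_eq_sum_dotProduct_mulVec]
    exact sum_congr rfl fun k _ => (dotProduct_mulVec_sub_const hrowAt hcolAt _ _).symm
  have hcoupling : ∀ k, c * γ k * qA k - γ₀ * l₁ * (c - L) * qT k ≤ -(δ k * w k) := fun k =>
    gain_terms_le hγ₀ hD hl₁ hl₂ hc (hγ k) (hδ k) (weightedVar_nonneg (fun i => (hξ i).le) _)
      (hcomp _ (hv k)) (hgap _ (hv k))
  calc _ = 2 * (∑ k, ∑ i, ξ i * weightedDev ξ (fun i => X i k) i * g (X i) k
        + ∑ k, (c * γ k * qA k - γ₀ * l₁ * (c - L) * qT k)) := by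
        rw [sum_congr rfl fun k _ => hsplit k, hQ, sum_add_distrib, sum_sub_distrib, ← mul_sum]
        field_simp
        ring
    _ ≤ 2 * (∑ k, (δ k - ϖ) * w k + ∑ k, -(δ k * w k)) := by
        gcongr 2 * ?_
        exact add_le_add (sum_weightedDev_mul_le_of_quad (fun i => (hξ i).le) hsum hg X)
          (sum_le_sum fun k _ => hcoupling k)
    _ = -(2 * ϖ) * disagreement ξ X := by
        rw [disagreement, ← sum_add_distrib, mul_sum, mul_sum]
        exact sum_congr rfl fun k _ => by ring

theorem sum_mul_sum_mul_nonpos {M : Matrix ι ι ℝ} (hrow : ∀ i, ∑ j, M i j = 0)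
    (hcol : ∀ j, ∑ i, M i j = 0) (hoff : ∀ i j, i ≠ j → 0 ≤ M i j) (X : ι → κ → ℝ) :
    ∑ i, ∑ j, M i j * ∑ k, X i k * X j k ≤ 0 := by
  rw [sum_mul_sum_mul_eq_sum_dotProduct_mulVec]
  exact sum_nonpos fun k _ => dotProduct_mulVec_nonpos hrow hcol hoff _

theorem exists_pos_dotProduct_diagonal_mul_mulVec_le [DecidableEq ι] {A At : Matrix ι ι ℝ}
    {ξ : ι → ℝ} (hoff : ∀ i j, i ≠ j → 0 ≤ A i j) (hrow : ∀ i, ∑ j, A i j = 0)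
    (hirr : ∀ S : Finset ι, S.Nonempty → S ≠ univ → ∃ i ∈ S, ∃ j, j ∉ S ∧ A i j ≠ 0)
    (hξ : ∀ i, 0 < ξ i) (hξA : ξ ᵥ* A = 0) :
    ∃ l > 0, ∀ v, ξ ⬝ᵥ v = 0 → v ⬝ᵥ (diagonal ξ * A) *ᵥ v ≤ l * (v ⬝ᵥ At *ᵥ v) := by
  obtain ⟨l, hl, h⟩ := exists_pos_dotProduct_mulVec_le_neg_mul (M := diagonal ξ * A)
    (p := fun v => -(v ⬝ᵥ At *ᵥ v)) (fun i => by simp [← mul_sum, hrow i])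
    (fun j => by simpa [vecMul, dotProduct] using congrFun hξA j)
    (fun i j hij => by simpa using mul_nonneg (hξ i).le (hoff i j hij))
    (fun S hS hSu => by
      obtain ⟨i, hi, j, hj, hij⟩ := hirr S hS hSu
      exact ⟨i, hi, j, hj, by simpa using ⟨(hξ i).ne', hij⟩⟩)
    hξ (continuous_id.dotProduct (continuous_const.matrix_mulVec continuous_id)).neg
    fun r v => by simp only [mulVec_smul, dotProduct_smul, smul_dotProduct, smul_eq_mul]; ring
  exact ⟨l, hl, fun v hv => by simpa only [neg_mul_neg] using h v hv⟩

theorem sum_row_eq_zero_of_diag {A : Matrix ι ι ℝ} [DecidableEq ι]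
    (hdiag : ∀ i, A i i = -∑ j ∈ univ.erase i, A i j) (i : ι) : ∑ j, A i j = 0 := by
  rw [← add_sum_erase _ _ (mem_univ i), hdiag i, neg_add_cancel]

theorem exists_pos_forall_le {γ : κ → ℝ} (hγ : ∀ k, 0 < γ k) : ∃ γ₀ > 0, ∀ k, γ₀ ≤ γ k := by
  cases isEmpty_or_nonempty κ
  · exact ⟨1, one_pos, fun k => isEmptyElim k⟩
  · obtain ⟨k₀, hk₀⟩ := Finite.exists_min γ
    exact ⟨γ k₀, hγ k₀, hk₀⟩

theorem exists_nonneg_forall_ge (δ : κ → ℝ) : ∃ D ≥ 0, ∀ k, δ k ≤ D := by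
  obtain ⟨D, hD⟩ := (Set.finite_range δ).bddAbove
  exact ⟨max D 0, le_max_right _ _, fun k => (hD ⟨k, rfl⟩).trans (le_max_left _ _)⟩

end CoupledSystem

theorem stmt13_general (N n : ℕ) (hN : 2 ≤ N) (A : Matrix (Fin N) (Fin N) ℝ)
    (hoff : ∀ i j, i ≠ j → 0 ≤ A i j)
    (hdiag : ∀ i, A i i = -∑ j ∈ Finset.univ.erase i, A i j)
    (hirr : ∀ S : Finset (Fin N), S.Nonempty → S ≠ Finset.univ →
      ∃ i ∈ S, ∃ j, j ∉ S ∧ A i j ≠ 0)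
    (At : Matrix (Fin N) (Fin N) ℝ)
    (hAtsym : ∀ i j, At i j = At j i)
    (hAtoff : ∀ i j, i ≠ j → 0 ≤ At i j)
    (hAtdiag : ∀ i, At i i = -∑ j ∈ Finset.univ.erase i, At i j)
    (hAtirr : ∀ S : Finset (Fin N), S.Nonempty → S ≠ Finset.univ →
      ∃ i ∈ S, ∃ j, j ∉ S ∧ At i j ≠ 0)
    (γ : Fin n → ℝ) (hγ : ∀ k, 0 < γ k)
    (δ : Fin n → ℝ) (ϖ : ℝ) (hϖ : 0 < ϖ)
    (f : (Fin n → ℝ) → ℝ → (Fin n → ℝ))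
    (hQUAD : ∀ x y : Fin n → ℝ, ∀ t : ℝ, 0 ≤ t →
      (∑ k, (x k - y k) * (f x t k - f y t k)) - (∑ k, δ k * (x k - y k) ^ 2)
        ≤ -ϖ * ∑ k, (x k - y k) ^ 2)
    (α : ℝ) (hα : 0 < α)
    (x : Fin N → ℝ → (Fin n → ℝ)) (c : ℝ → ℝ) (hc0 : c 0 = 0)
    (hODE : ∀ i, ∀ t : ℝ, 0 ≤ t →
      HasDerivAt (x i)
        (fun k => f (x i t) t k
          + c t * ∑ j ∈ Finset.univ.erase i, A i j * (γ k * (x j t k - x i t k))) t)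
    (hcODE : ∀ t : ℝ, 0 ≤ t →
      HasDerivAt c (-(α / 2) * ∑ i, ∑ j, At i j * ∑ k, x i t k * x j t k) t) :
    (∀ i j, Tendsto (fun t => ‖x i t - x j t‖) atTop (nhds 0)) ∧
    ∃ c₀ : ℝ, Tendsto c atTop (nhds c₀) := by
  have : Nonempty (Fin N) := ⟨⟨0, by omega⟩⟩
  have hrowA := sum_row_eq_zero_of_diag hdiag
  have hrowAt := sum_row_eq_zero_of_diag hAtdiag
  have hcolAt : ∀ j, ∑ i, At i j = 0 := fun j => by simpa only [hAtsym] using hrowAt j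
  obtain ⟨ξ, hξ, hξA⟩ := exists_pos_vecMul_eq_zero hoff hrowA hirr
  have hsum : ∑ i, ξ i ≠ 0 := (sum_pos (fun i _ => hξ i) univ_nonempty).ne'
  obtain ⟨l₁, hl₁, hcomp⟩ :=
    exists_pos_dotProduct_diagonal_mul_mulVec_le (At := At) hoff hrowA hirr hξ hξA
  obtain ⟨l₂, hl₂, hgap⟩ := exists_pos_dotProduct_mulVec_le_neg_mul hrowAt hcolAt hAtoff hAtirr
    hξ (p := fun v => ∑ i, ξ i * v i ^ 2) (by fun_prop)
    fun r v => by
      simp only [mul_sum, Pi.smul_apply, smul_eq_mul]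
      exact sum_congr rfl fun i _ => by ring
  obtain ⟨γ₀, hγ₀, hγγ₀⟩ := exists_pos_forall_le hγ
  obtain ⟨D, hD, hδD⟩ := exists_nonneg_forall_ge δ
  have hċ : ∀ t, 0 ≤ t → 0 ≤ -(α / 2) * ∑ i, ∑ j, At i j * ∑ k, x i t k * x j t k := fun t _ =>
    mul_nonneg_of_nonpos_of_nonpos (by linarith) (sum_mul_sum_mul_nonpos hrowAt hcolAt hAtoff _)
  have hc : ∀ t, 0 ≤ t → 0 ≤ c t := fun t ht =>
    hc0 ▸ monotoneOn_Ici_of_hasDerivAt_nonneg hcODE hċ Set.self_mem_Ici ht ht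
  obtain ⟨hW, c₀, hc₀⟩ := tendsto_of_lyapunov (β := 2 * γ₀ * l₁ / α)
    (L := D / (γ₀ * l₁ * l₂)) (by positivity) (by positivity : 0 < 2 * ϖ)
    (fun t ht => hasDerivAt_disagreement hsum fun i => hODE i t ht) hcODE
    (fun t _ => sum_nonneg fun k _ => weightedVar_nonneg (fun i => (hξ i).le) _) hċ
    fun t ht => lyapunov_deriv_le hα hγ₀ hD hl₁ hl₂ (hc t ht) hrowA hrowAt hcolAt hξ hγγ₀ hδD
      hcomp hgap (fun y z => hQUAD y z t ht) _
  exact ⟨tendsto_norm_sub_of_tendsto_disagreement hξ hW, c₀, hc₀⟩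

/-- Theorem 2: linearly coupled systems with an unknown irreducible
coupling matrix A satisfying Condition A1 and adaptive scheme driven by any irreducible
matrix Ã satisfying Condition A2:
ẋᵢ = f(xᵢ,t) + c(t) Σ_{j≠i} a_{ij} Γ(xⱼ − xᵢ), ċ = −(α/2) Σᵢⱼ ãᵢⱼ xᵢᵀxⱼ, c(0) = 0,
where Γ = diag(γ) > 0 and f ∈ QUAD(Δ,ϖ). Then ‖xᵢ(t) − xⱼ(t)‖ → 0 for all i,j,
and c(t) converges to a finite limit. -/
theorem stmt13 (N n : ℕ) (hN : 2 ≤ N) (A : Matrix (Fin N) (Fin N) ℝ)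
    (hoff : ∀ i j, i ≠ j → 0 ≤ A i j)
    (hdiag : ∀ i, A i i = -∑ j ∈ Finset.univ.erase i, A i j)
    (hirr : ∀ S : Finset (Fin N), S.Nonempty → S ≠ Finset.univ →
      ∃ i ∈ S, ∃ j, j ∉ S ∧ A i j ≠ 0)
    (At : Matrix (Fin N) (Fin N) ℝ)
    (hAtsym : ∀ i j, At i j = At j i)
    (hAtoff : ∀ i j, i ≠ j → 0 ≤ At i j)
    (hAtdiag : ∀ i, At i i = -∑ j ∈ Finset.univ.erase i, At i j)
    (hAtirr : ∀ S : Finset (Fin N), S.Nonempty → S ≠ Finset.univ →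
      ∃ i ∈ S, ∃ j, j ∉ S ∧ At i j ≠ 0)
    (γ : Fin n → ℝ) (hγ : ∀ k, 0 < γ k)
    (δ : Fin n → ℝ) (ϖ : ℝ) (hϖ : 0 < ϖ)
    (f : (Fin n → ℝ) → ℝ → (Fin n → ℝ))
    (hf : Continuous fun p : (Fin n → ℝ) × ℝ => f p.1 p.2)
    (hQUAD : ∀ x y : Fin n → ℝ, ∀ t : ℝ, 0 ≤ t →
      (∑ k, (x k - y k) * (f x t k - f y t k)) - (∑ k, δ k * (x k - y k) ^ 2)
        ≤ -ϖ * ∑ k, (x k - y k) ^ 2)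
    (α : ℝ) (hα : 0 < α)
    (x : Fin N → ℝ → (Fin n → ℝ)) (c : ℝ → ℝ) (hc0 : c 0 = 0)
    (hODE : ∀ i, ∀ t : ℝ, 0 ≤ t →
      HasDerivAt (x i)
        (fun k => f (x i t) t k
          + c t * ∑ j ∈ Finset.univ.erase i, A i j * (γ k * (x j t k - x i t k))) t)
    (hcODE : ∀ t : ℝ, 0 ≤ t →
      HasDerivAt c (-(α / 2) * ∑ i, ∑ j, At i j * ∑ k, x i t k * x j t k) t) :
    (∀ i j, Tendsto (fun t => ‖x i t - x j t‖) atTop (nhds 0)) ∧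
    ∃ c₀ : ℝ, Tendsto c atTop (nhds c₀) :=
  stmt13_general N n hN A hoff hdiag hirr At hAtsym hAtoff hAtdiag hAtirr γ hγ δ ϖ hϖ f hQUAD α hα x
    c hc0 hODE hcODE
end
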